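/- arXiv:2308.16696 — 8 statements merged into one kernel-verified Lean document; each statement's English description precedes it below -/
import Mathlib

section
/- Let α ∈ (0,1), and suppose F : [0,T] → L^p(Ω;ℝ^d) is continuous and there exist K > 0, μ ∈ [0,1) and ν ∈ [0,1) such that ‖F(t) − F(s)‖_{L^p} ≤ K·s^{−μ}·(t−s)^{ν} for all 0 < s < t ≤ T. Then for every sufficiently small ε > 0 there exists a constant C > 0, independent of s and t, such that for all 0 < s < t ≤ T: (i) if ν ≠ α, then ‖Λ_F(t) − Λ_F(s)‖_{L^p} ≤ C·(t^{1−α} − s^{1−α}) + C·s^{−μ}·(t−s)^{min{1−α+ν, 1}}; (ii) if ν = α, then ‖Λ_F(t) − Λ_F(s)‖_{L^p} ≤ C·(t^{1−α} − s^{1−α}) + C·s^{−μ}·(t−s)^{1−ε}. -/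
/-!
Write `δ = t - s`. Subtracting `F s` under both integrals gives
`Λ_F(t) - Λ_F(s) = ∫₀ˢ ((t-u)^{-α} - (s-u)^{-α}) (F u - F s) du + ∫ₛᵗ (t-u)^{-α} (F u - F s) du`
`+ (t^{1-α} - s^{1-α}) F(s) / (1-α)`.
The last term is `O(t^{1-α} - s^{1-α})` and, by the Hölder bound, the second is
`O(s^{-μ} δ^{1+ν-α})`. If `s ≤ 2δ`, the first term is `O(δ^{1-α})`, and `δ^{1-α}` is itself
`O(t^{1-α} - s^{1-α})` because `t ≤ 3δ`. If `2δ < s`, split `[0, s]` at `s/2` and `s - δ`: the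
kernel difference is at most `α δ (s-u)^{-α-1}` on the first two pieces and at most `(s-u)^{-α}`
on the last, and `u^{-μ} ≤ 2^μ s^{-μ}` away from `0`. The first term is then `O(s^{-μ})` times
`δ (s/2)^{ν-α} + δ ∫_δ^{s/2} r^{ν-α-1} dr + δ^{1+ν-α}`, which is `O(δ^{1+ν-α})` if `ν < α`,
`O(δ)` if `ν > α`, and `O(δ^{1-ε})` if `ν = α`, where the integral is a logarithm.
-/

open MeasureTheory Set intervalIntegral
open scoped ENNReal

lemma intervalIntegrable_sub_rpow {r : ℝ} (hr : -1 < r) (c a b : ℝ) :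
    IntervalIntegrable (fun u => (c - u) ^ r) volume a b := by
  simpa using (intervalIntegrable_rpow' (a := c - a) (b := c - b) hr).comp_sub_left c

lemma integral_sub_rpow {r : ℝ} (hr : -1 < r) (c a b : ℝ) :
    ∫ u in a..b, (c - u) ^ r = ((c - a) ^ (r + 1) - (c - b) ^ (r + 1)) / (r + 1) := by
  rw [integral_comp_sub_left (fun x => x ^ r) c, integral_rpow (Or.inl hr)]

lemma integral_rpow_sub_one_of_ne_zero {a x y : ℝ} (ha : a ≠ 0) (hx : 0 < x) (hxy : x ≤ y) :
    ∫ r in x..y, r ^ (a - 1) = (y ^ a - x ^ a) / a := by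
  have h0 : (0 : ℝ) ∉ uIcc x y := by
    rw [uIcc_of_le hxy]; exact fun h => hx.not_ge h.1
  rw [integral_rpow (Or.inr ⟨by contrapose! ha; linarith, h0⟩), sub_add_cancel]

lemma rpow_neg_sub_rpow_neg_le {α x y : ℝ} (hα : 0 < α) (hx : 0 < x) (hxy : x ≤ y) :
    x ^ (-α) - y ^ (-α) ≤ α * (y - x) * x ^ (-α - 1) := by
  have hle : ∫ r in x..y, r ^ (-α - 1) ≤ ∫ _ in x..y, x ^ (-α - 1) := by
    refine integral_mono_on hxy ?_ intervalIntegrable_const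
      fun r hr => Real.rpow_le_rpow_of_nonpos hx hr.1 (by linarith)
    exact (continuousOn_id.rpow_const fun r hr => Or.inl (by
      rw [uIcc_of_le hxy] at hr; exact (hx.trans_le hr.1).ne')).intervalIntegrable
  rw [integral_rpow_sub_one_of_ne_zero (neg_ne_zero.mpr hα.ne') hx hxy,
    intervalIntegral.integral_const, smul_eq_mul, div_le_iff_of_neg (by linarith)] at hle
  linarith

lemma rpow_neg_sub_le_rpow_neg_sub {α s t u : ℝ} (hα : 0 ≤ α) (hus : u < s) (hst : s ≤ t) :
    (t - u) ^ (-α) ≤ (s - u) ^ (-α) :=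
  Real.rpow_le_rpow_of_nonpos (by linarith) (by linarith) (by linarith)

lemma mul_rpow_neg_le_rpow_sub_rpow {α s t : ℝ} (hα₀ : 0 ≤ α) (hα₁ : α < 1) (hs : 0 < s)
    (hst : s ≤ t) : (1 - α) * (t - s) * t ^ (-α) ≤ t ^ (1 - α) - s ^ (1 - α) := by
  have hle : ∫ _ in s..t, t ^ (-α) ≤ ∫ u in s..t, u ^ (-α) :=
    integral_mono_on hst intervalIntegrable_const (intervalIntegrable_rpow' (by linarith))
      fun u hu => Real.rpow_le_rpow_of_nonpos (hs.trans_le hu.1) hu.2 (by linarith)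
  rw [intervalIntegral.integral_const, smul_eq_mul, integral_rpow (Or.inl (by linarith)),
    neg_add_eq_sub, le_div_iff₀ (by linarith)] at hle
  linarith

lemma sub_rpow_le_mul_rpow_sub_rpow {α s t L : ℝ} (hα₀ : 0 ≤ α) (hα₁ : α < 1) (hs : 0 < s)
    (hst : s < t) (htL : t ≤ L * (t - s)) :
    (t - s) ^ (1 - α) ≤ L ^ α / (1 - α) * (t ^ (1 - α) - s ^ (1 - α)) := by
  have hδ : 0 < t - s := by linarith
  have hL : 0 < L := pos_of_mul_pos_left (by linarith) hδ.le
  have hα : 1 - α ≠ 0 := by linarith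
  have hLδ : (L * (t - s)) ^ (-α) ≤ t ^ (-α) :=
    Real.rpow_le_rpow_of_nonpos (by linarith) htL (by linarith)
  rw [Real.mul_rpow hL.le hδ.le] at hLδ
  calc (t - s) ^ (1 - α)
        = L ^ α / (1 - α) * ((1 - α) * (t - s) * (L ^ (-α) * (t - s) ^ (-α))) := by
        rw [Real.rpow_neg hL.le, Real.rpow_sub hδ, Real.rpow_one, Real.rpow_neg hδ.le]
        field_simp
    _ ≤ L ^ α / (1 - α) * ((1 - α) * (t - s) * t ^ (-α)) := by gcongr
    _ ≤ L ^ α / (1 - α) * (t ^ (1 - α) - s ^ (1 - α)) :=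
        mul_le_mul_of_nonneg_left (mul_rpow_neg_le_rpow_sub_rpow hα₀ hα₁ hs hst.le)
          (div_nonneg (by positivity) (by linarith))

lemma mul_rpow_add_mul_integral_le_of_neg {a δ σ : ℝ} (ha : a < 0) (hδ : 0 < δ) (hδσ : δ ≤ σ) :
    δ * σ ^ a + δ * ∫ r in δ..σ, r ^ (a - 1) ≤ (1 - a⁻¹) * δ ^ (1 + a) := by
  have hσ : σ ^ a ≤ δ ^ a := Real.rpow_le_rpow_of_nonpos hδ hδσ ha.le
  have hσ0 : 0 ≤ σ ^ a := Real.rpow_nonneg (hδ.le.trans hδσ) a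
  rw [integral_rpow_sub_one_of_ne_zero ha.ne hδ hδσ, Real.rpow_add hδ, Real.rpow_one]
  have hint : (σ ^ a - δ ^ a) / a ≤ -δ ^ a / a := div_le_div_of_nonpos_of_le ha.le (by linarith)
  calc δ * σ ^ a + δ * ((σ ^ a - δ ^ a) / a) ≤ δ * δ ^ a + δ * (-δ ^ a / a) := by gcongr
    _ = (1 - a⁻¹) * (δ * δ ^ a) := by ring

lemma mul_rpow_add_mul_integral_le_of_pos {a δ σ T : ℝ} (ha : 0 < a) (hδ : 0 < δ) (hδσ : δ ≤ σ)
    (hσT : σ ≤ T) :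
    δ * σ ^ a + δ * ∫ r in δ..σ, r ^ (a - 1) ≤ (1 + a⁻¹) * T ^ a * δ := by
  have hσ : σ ^ a ≤ T ^ a := Real.rpow_le_rpow (hδ.le.trans hδσ) hσT ha.le
  have hδ0 : 0 ≤ δ ^ a := Real.rpow_nonneg hδ.le a
  rw [integral_rpow_sub_one_of_ne_zero ha.ne' hδ hδσ]
  have hint : (σ ^ a - δ ^ a) / a ≤ T ^ a / a := div_le_div_of_nonneg_right (by linarith) ha.le
  calc δ * σ ^ a + δ * ((σ ^ a - δ ^ a) / a) ≤ δ * T ^ a + δ * (T ^ a / a) := by gcongr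
    _ = (1 + a⁻¹) * T ^ a * δ := by ring

lemma mul_rpow_add_mul_integral_le_of_eq_zero {a δ σ T ε : ℝ} (ha : a = 0) (hε : 0 < ε)
    (hδ : 0 < δ) (hδσ : δ ≤ σ) (hσT : σ ≤ T) :
    δ * σ ^ a + δ * ∫ r in δ..σ, r ^ (a - 1) ≤ (1 + ε⁻¹) * T ^ ε * δ ^ (1 - ε) := by
  subst ha
  have hσ : 0 < σ := hδ.trans_le hδσ
  have hT : 0 < T := hσ.trans_le hσT
  have h0 : (0 : ℝ) ∉ uIcc δ σ := by
    rw [uIcc_of_le hδσ]; exact fun h => hδ.not_ge h.1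
  have hδε : δ * δ ^ (-ε) = δ ^ (1 - ε) := by
    rw [sub_eq_add_neg, Real.rpow_add hδ, Real.rpow_one]
  have hδ_le : δ ≤ T ^ ε * δ ^ (1 - ε) :=
    calc δ = δ ^ ε * δ ^ (1 - ε) := by rw [← Real.rpow_add hδ, add_sub_cancel, Real.rpow_one]
      _ ≤ T ^ ε * δ ^ (1 - ε) := by gcongr; linarith
  have hlog : δ * Real.log (σ / δ) ≤ T ^ ε * δ ^ (1 - ε) / ε :=
    calc δ * Real.log (σ / δ) ≤ δ * ((σ / δ) ^ ε / ε) := by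
          gcongr; exact Real.log_le_rpow_div (by positivity) hε
      _ ≤ δ * ((T / δ) ^ ε / ε) := by gcongr
      _ = T ^ ε * δ ^ (1 - ε) / ε := by
          rw [Real.div_rpow hT.le hδ.le, ← hδε, Real.rpow_neg hδ.le]; ring
  rw [zero_sub, Real.rpow_zero, mul_one, integral_congr (fun r _ => Real.rpow_neg_one r),
    integral_inv h0]
  calc δ + δ * Real.log (σ / δ) ≤ T ^ ε * δ ^ (1 - ε) + T ^ ε * δ ^ (1 - ε) / ε := by linarith
    _ = (1 + ε⁻¹) * T ^ ε * δ ^ (1 - ε) := by ring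

section SingularConvolution

variable {E : Type*} [NormedAddCommGroup E] [NormedSpace ℝ E]

noncomputable def singularConv (α : ℝ) (F : ℝ → E) (t : ℝ) : E :=
  ∫ u in (0 : ℝ)..t, (t - u) ^ (-α) • F u

lemma intervalIntegrable_sub_rpow_smul {r : ℝ} (hr : -1 < r) (c : ℝ) {G : ℝ → E} {a b : ℝ}
    (hG : ContinuousOn G (uIcc a b)) :
    IntervalIntegrable (fun u => (c - u) ^ r • G u) volume a b :=
  (intervalIntegrable_sub_rpow hr c a b).smul_continuousOn hG

lemma singularConv_add {α t : ℝ} (hα : α < 1) {F G : ℝ → E} (hF : ContinuousOn F (uIcc 0 t))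
    (hG : ContinuousOn G (uIcc 0 t)) :
    singularConv α (fun u => F u + G u) t = singularConv α F t + singularConv α G t := by
  simp only [singularConv, smul_add]
  exact integral_add (intervalIntegrable_sub_rpow_smul (by linarith) t hF)
    (intervalIntegrable_sub_rpow_smul (by linarith) t hG)

lemma singularConv_const [CompleteSpace E] {α : ℝ} (hα : α < 1) (t : ℝ) (c : E) :
    singularConv α (fun _ => c) t = (t ^ (1 - α) / (1 - α)) • c := by
  rw [singularConv, intervalIntegral.integral_smul_const, integral_sub_rpow (by linarith),
    sub_self, sub_zero, neg_add_eq_sub, Real.zero_rpow (by linarith), sub_zero]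

lemma singularConv_sub_singularConv {α s t : ℝ} (hα : α < 1) (hs : 0 ≤ s) (hst : s ≤ t)
    {G : ℝ → E} (hG : ContinuousOn G (Icc 0 t)) :
    singularConv α G t - singularConv α G s =
      (∫ u in (0 : ℝ)..s, ((t - u) ^ (-α) - (s - u) ^ (-α)) • G u) +
        ∫ u in s..t, (t - u) ^ (-α) • G u := by
  have hG₁ : ContinuousOn G (uIcc 0 s) := hG.mono (by rw [uIcc_of_le hs]; gcongr)
  have hG₂ : ContinuousOn G (uIcc s t) := hG.mono (by rw [uIcc_of_le hst]; gcongr)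
  have hr : -1 < -α := by linarith
  simp only [singularConv, sub_smul]
  rw [← integral_add_adjacent_intervals (intervalIntegrable_sub_rpow_smul hr t hG₁)
    (intervalIntegrable_sub_rpow_smul hr t hG₂), integral_sub
    (intervalIntegrable_sub_rpow_smul hr t hG₁) (intervalIntegrable_sub_rpow_smul hr s hG₁)]
  abel

lemma singularConv_sub_eq [CompleteSpace E] {α s t : ℝ} (hα : α < 1) (hs : 0 ≤ s)
    (hst : s ≤ t) {F : ℝ → E} (hF : ContinuousOn F (Icc 0 t)) :
    singularConv α F t - singularConv α F s =
      (∫ u in (0 : ℝ)..s, ((t - u) ^ (-α) - (s - u) ^ (-α)) • (F u - F s)) +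
        (∫ u in s..t, (t - u) ^ (-α) • (F u - F s)) +
          ((t ^ (1 - α) - s ^ (1 - α)) / (1 - α)) • F s := by
  have hG : ContinuousOn (fun u => F u - F s) (Icc 0 t) := hF.sub continuousOn_const
  have hsplit : ∀ r, 0 ≤ r → r ≤ t →
      singularConv α F r =
        singularConv α (fun u => F u - F s) r + singularConv α (fun _ => F s) r := by
    intro r hr hrt
    rw [← singularConv_add hα (hG.mono ?_) continuousOn_const]
    · simp only [sub_add_cancel]
    · rw [uIcc_of_le hr]; gcongr
  rw [hsplit t (hs.trans hst) le_rfl, hsplit s hs hst, add_sub_add_comm,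
    singularConv_sub_singularConv hα hs hst hG, singularConv_const hα, singularConv_const hα,
    ← sub_smul, sub_div]

lemma norm_integral_le_of_norm_le_on_Ioo {f : ℝ → E} {g : ℝ → ℝ} {a b : ℝ} (hab : a ≤ b)
    (h : ∀ u ∈ Ioo a b, ‖f u‖ ≤ g u) (hg : IntervalIntegrable g volume a b) :
    ‖∫ u in a..b, f u‖ ≤ ∫ u in a..b, g u :=
  norm_integral_le_of_norm_le hab ((Measure.ae_ne volume b).mono
    fun u hub hu => h u ⟨hu.1, lt_of_le_of_ne hu.2 hub⟩) hg

lemma norm_integral_sub_rpow_smul_le {α s t B : ℝ} (hα : α < 1) (hst : s ≤ t) {G : ℝ → E}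
    (hG : ∀ u ∈ Ioo s t, ‖G u‖ ≤ B) :
    ‖∫ u in s..t, (t - u) ^ (-α) • G u‖ ≤ B * ((t - s) ^ (1 - α) / (1 - α)) := by
  have h := norm_integral_le_of_norm_le_on_Ioo hst (f := fun u => (t - u) ^ (-α) • G u)
    (g := fun u => B * (t - u) ^ (-α))
    (fun u hu => by
      rw [norm_smul, Real.norm_of_nonneg (Real.rpow_nonneg (by linarith [hu.2]) _), mul_comm]
      exact mul_le_mul_of_nonneg_right (hG u hu) (Real.rpow_nonneg (by linarith [hu.2]) _))
    ((intervalIntegrable_sub_rpow (by linarith) t s t).const_mul B)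
  rwa [intervalIntegral.integral_const_mul, integral_sub_rpow (by linarith), sub_self,
    neg_add_eq_sub, Real.zero_rpow (by linarith), sub_zero] at h

lemma norm_integral_kernel_sub_smul_le {α s t B : ℝ} (hα₀ : 0 ≤ α) (hα₁ : α < 1) (hs : 0 < s)
    (hst : s ≤ t) {G : ℝ → E} (hG : ∀ u ∈ Ioo 0 s, ‖G u‖ ≤ B) :
    ‖∫ u in (0 : ℝ)..s, ((t - u) ^ (-α) - (s - u) ^ (-α)) • G u‖ ≤
      B * ((t - s) ^ (1 - α) / (1 - α)) := by
  have hB : 0 ≤ B := (norm_nonneg _).trans (hG (s / 2) ⟨by linarith, by linarith⟩)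
  have hr : -1 < -α := by linarith
  have h := norm_integral_le_of_norm_le_on_Ioo hs.le
    (f := fun u => ((t - u) ^ (-α) - (s - u) ^ (-α)) • G u)
    (g := fun u => B * ((s - u) ^ (-α) - (t - u) ^ (-α)))
    (fun u hu => by
      rw [norm_smul, Real.norm_eq_abs, abs_sub_comm,
        abs_of_nonneg (sub_nonneg.2 (rpow_neg_sub_le_rpow_neg_sub hα₀ hu.2 hst)), mul_comm]
      exact mul_le_mul_of_nonneg_right (hG u hu)
        (sub_nonneg.2 (rpow_neg_sub_le_rpow_neg_sub hα₀ hu.2 hst)))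
    (((intervalIntegrable_sub_rpow hr s 0 s).sub
      (intervalIntegrable_sub_rpow hr t 0 s)).const_mul B)
  rw [intervalIntegral.integral_const_mul, integral_sub (intervalIntegrable_sub_rpow hr s 0 s)
    (intervalIntegrable_sub_rpow hr t 0 s), integral_sub_rpow hr, integral_sub_rpow hr] at h
  refine h.trans (mul_le_mul_of_nonneg_left ?_ hB)
  have hts : s ^ (1 - α) ≤ t ^ (1 - α) := Real.rpow_le_rpow hs.le hst (by linarith)
  simp only [sub_zero, sub_self, neg_add_eq_sub, Real.zero_rpow (show 1 - α ≠ 0 by linarith)]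
  rw [← sub_div]
  exact div_le_div_of_nonneg_right (by linarith) (by linarith)

lemma norm_kernel_sub_smul_le_mul_rpow {α ν s t u W : ℝ} (hα : 0 < α) (hus : u < s)
    (hst : s ≤ t) {g : E} (hg : ‖g‖ ≤ W * (s - u) ^ ν) :
    ‖((t - u) ^ (-α) - (s - u) ^ (-α)) • g‖ ≤ α * (t - s) * W * (s - u) ^ (ν - α - 1) := by
  have hsu : 0 < s - u := by linarith
  have hk := rpow_neg_sub_rpow_neg_le hα hsu (show s - u ≤ t - u by linarith)
  rw [show t - u - (s - u) = t - s by ring] at hk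
  rw [norm_smul, Real.norm_eq_abs, abs_sub_comm,
    abs_of_nonneg (sub_nonneg.2 (rpow_neg_sub_le_rpow_neg_sub hα.le hus hst))]
  calc _ ≤ α * (t - s) * (s - u) ^ (-α - 1) * (W * (s - u) ^ ν) :=
        mul_le_mul hk hg (norm_nonneg _)
          (mul_nonneg (mul_nonneg hα.le (by linarith)) (Real.rpow_nonneg hsu.le _))
    _ = α * (t - s) * W * (s - u) ^ (ν - α - 1) := by
        rw [show ν - α - 1 = -α - 1 + ν by ring, Real.rpow_add hsu]; ring

lemma norm_kernel_sub_smul_le {α ν s t u W : ℝ} (hα : 0 ≤ α) (hus : u < s) (hst : s ≤ t)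
    {g : E} (hg : ‖g‖ ≤ W * (s - u) ^ ν) :
    ‖((t - u) ^ (-α) - (s - u) ^ (-α)) • g‖ ≤ W * (s - u) ^ (ν - α) := by
  have hsu : 0 < s - u := by linarith
  rw [norm_smul, Real.norm_eq_abs, abs_sub_comm,
    abs_of_nonneg (sub_nonneg.2 (rpow_neg_sub_le_rpow_neg_sub hα hus hst))]
  calc _ ≤ (s - u) ^ (-α) * (W * (s - u) ^ ν) :=
        mul_le_mul (by linarith [Real.rpow_nonneg (show 0 ≤ t - u by linarith) (-α)]) hg
          (norm_nonneg _) (Real.rpow_nonneg hsu.le _)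
    _ = W * (s - u) ^ (ν - α) := by
        rw [sub_eq_neg_add ν, Real.rpow_add hsu]; ring

variable {α μ ν K s t T c β : ℝ} {G : ℝ → E}

lemma norm_integral_sub_rpow_smul_le_of_holder {W : ℝ} (hα₁ : α < 1) (hν₀ : 0 ≤ ν) (hst : s < t)
    (hW : 0 ≤ W) (hG : ∀ u ∈ Ioo s t, ‖G u‖ ≤ W * (u - s) ^ ν) :
    ‖∫ u in s..t, (t - u) ^ (-α) • G u‖ ≤ W / (1 - α) * ((t - s) * (t - s) ^ (ν - α)) := by
  have hδ : 0 < t - s := sub_pos.2 hst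
  refine (norm_integral_sub_rpow_smul_le hα₁ hst.le (B := W * (t - s) ^ ν)
    fun u hu => (hG u hu).trans ?_).trans (le_of_eq ?_)
  · gcongr; linarith [hu.1]; linarith [hu.2]
  · rw [mul_div_assoc', mul_assoc, ← Real.rpow_add hδ, show ν + (1 - α) = ν - α + 1 by ring,
      Real.rpow_add_one hδ.ne']
    ring

lemma norm_integral_kernel_sub_smul_le_left (hα : 0 < α) (hμ : μ < 1) (hνα : ν - α ≤ 1)
    (hK : 0 ≤ K) (hs : 0 < s) (hst : s ≤ t)
    (hG : ∀ u ∈ Ioo 0 s, ‖G u‖ ≤ K * u ^ (-μ) * (s - u) ^ ν) :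
    ‖∫ u in (0 : ℝ)..s / 2, ((t - u) ^ (-α) - (s - u) ^ (-α)) • G u‖ ≤
      K * α * (t - s) * (s / 2) ^ (ν - α - 1) * ((s / 2) ^ (1 - μ) / (1 - μ)) := by
  have h := norm_integral_le_of_norm_le_on_Ioo (show 0 ≤ s / 2 by linarith)
    (f := fun u => ((t - u) ^ (-α) - (s - u) ^ (-α)) • G u)
    (g := fun u => K * α * (t - s) * (s / 2) ^ (ν - α - 1) * u ^ (-μ))
    (fun u hu => by
      have hus : u < s := by linarith [hu.2]
      refine (norm_kernel_sub_smul_le_mul_rpow hα hus hst (hG u ⟨hu.1, hus⟩)).trans ?_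
      have : (s - u) ^ (ν - α - 1) ≤ (s / 2) ^ (ν - α - 1) :=
        Real.rpow_le_rpow_of_nonpos (by linarith) (by linarith [hu.2]) (by linarith)
      calc α * (t - s) * (K * u ^ (-μ)) * (s - u) ^ (ν - α - 1)
          ≤ α * (t - s) * (K * u ^ (-μ)) * (s / 2) ^ (ν - α - 1) := by
            gcongr
            exact mul_nonneg (mul_nonneg hα.le (by linarith))
              (mul_nonneg hK (Real.rpow_nonneg hu.1.le _))
        _ = _ := by ring)
    ((intervalIntegrable_rpow' (by linarith)).const_mul _)
  rwa [intervalIntegral.integral_const_mul, integral_rpow (Or.inl (by linarith)),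
    neg_add_eq_sub, Real.zero_rpow (by linarith), sub_zero] at h

lemma norm_integral_kernel_sub_smul_le_middle (hα : 0 < α) (hμ : 0 ≤ μ) (hK : 0 ≤ K)
    (hst : s < t) (hnear : 2 * (t - s) ≤ s)
    (hG : ∀ u ∈ Ioo 0 s, ‖G u‖ ≤ K * u ^ (-μ) * (s - u) ^ ν) :
    ‖∫ u in s / 2..s - (t - s), ((t - u) ^ (-α) - (s - u) ^ (-α)) • G u‖ ≤
      K * α * (t - s) * (s / 2) ^ (-μ) * ∫ r in (t - s)..s / 2, r ^ (ν - α - 1) := by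
  have hcont :
      ContinuousOn (fun u => (s - u) ^ (ν - α - 1)) (uIcc (s / 2) (s - (t - s))) := by
    refine (continuousOn_const.sub continuousOn_id).rpow_const fun u hu => Or.inl ?_
    rw [uIcc_of_le (by linarith)] at hu
    exact (show 0 < s - u by linarith [hu.2]).ne'
  have h := norm_integral_le_of_norm_le_on_Ioo (show s / 2 ≤ s - (t - s) by linarith)
    (f := fun u => ((t - u) ^ (-α) - (s - u) ^ (-α)) • G u)
    (g := fun u => K * α * (t - s) * (s / 2) ^ (-μ) * (s - u) ^ (ν - α - 1))
    (fun u hu => by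
      have hus : u < s := by linarith [hu.2]
      refine (norm_kernel_sub_smul_le_mul_rpow hα hus hst.le
        (hG u ⟨by linarith [hu.1], hus⟩)).trans ?_
      have : u ^ (-μ) ≤ (s / 2) ^ (-μ) :=
        Real.rpow_le_rpow_of_nonpos (by linarith) hu.1.le (by linarith)
      calc α * (t - s) * (K * u ^ (-μ)) * (s - u) ^ (ν - α - 1)
          ≤ α * (t - s) * (K * (s / 2) ^ (-μ)) * (s - u) ^ (ν - α - 1) := by
            gcongr
        _ = _ := by ring)
    (hcont.intervalIntegrable.const_mul _)
  rwa [intervalIntegral.integral_const_mul,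
    integral_comp_sub_left (fun r => r ^ (ν - α - 1)) s, show s - (s - (t - s)) = t - s by ring,
    show s - s / 2 = s / 2 by ring] at h

lemma norm_integral_kernel_sub_smul_le_right (hα : 0 ≤ α) (hμ : 0 ≤ μ) (hνα : -1 < ν - α)
    (hK : 0 ≤ K) (hst : s ≤ t) (hnear : 2 * (t - s) ≤ s)
    (hG : ∀ u ∈ Ioo 0 s, ‖G u‖ ≤ K * u ^ (-μ) * (s - u) ^ ν) :
    ‖∫ u in s - (t - s)..s, ((t - u) ^ (-α) - (s - u) ^ (-α)) • G u‖ ≤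
      K * (s / 2) ^ (-μ) * ((t - s) ^ (ν - α + 1) / (ν - α + 1)) := by
  have h := norm_integral_le_of_norm_le_on_Ioo (show s - (t - s) ≤ s by linarith)
    (f := fun u => ((t - u) ^ (-α) - (s - u) ^ (-α)) • G u)
    (g := fun u => K * (s / 2) ^ (-μ) * (s - u) ^ (ν - α))
    (fun u hu => by
      have hs2 : 0 < s / 2 := by linarith [hu.1, hu.2]
      refine (norm_kernel_sub_smul_le hα hu.2 hst (hG u ⟨by linarith [hu.1], hu.2⟩)).trans ?_
      have : u ^ (-μ) ≤ (s / 2) ^ (-μ) :=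
        Real.rpow_le_rpow_of_nonpos hs2 (by linarith [hu.1]) (by linarith)
      gcongr
      exact Real.rpow_nonneg (by linarith [hu.2]) _)
    ((intervalIntegrable_sub_rpow hνα s _ _).const_mul _)
  rwa [intervalIntegral.integral_const_mul, integral_sub_rpow hνα, sub_self,
    Real.zero_rpow (by linarith), sub_zero, show s - (s - (t - s)) = t - s by ring] at h

lemma norm_integral_kernel_sub_smul_le_of_near (hα₀ : 0 < α) (hα₁ : α < 1) (hμ₀ : 0 ≤ μ)
    (hμ₁ : μ < 1) (hν₀ : 0 ≤ ν) (hν₁ : ν ≤ 1) (hK : 0 ≤ K) (hst : s < t)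
    (hnear : 2 * (t - s) ≤ s) (hGc : ContinuousOn G (Icc 0 s))
    (hG : ∀ u ∈ Ioo 0 s, ‖G u‖ ≤ K * u ^ (-μ) * (s - u) ^ ν) :
    ‖∫ u in (0 : ℝ)..s, ((t - u) ^ (-α) - (s - u) ^ (-α)) • G u‖ ≤
      K * 2 ^ μ * (α / (1 - μ) + 1 / (ν - α + 1)) * s ^ (-μ) *
        ((t - s) * (s / 2) ^ (ν - α) + (t - s) * (∫ r in (t - s)..s / 2, r ^ (ν - α - 1)) +
          (t - s) * (t - s) ^ (ν - α)) := by
  have hs : 0 < s := by linarith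
  have hr : -1 < -α := by linarith
  have hf : ∀ a b, 0 ≤ a → a ≤ b → b ≤ s →
      IntervalIntegrable (fun u => ((t - u) ^ (-α) - (s - u) ^ (-α)) • G u) volume a b :=
    fun a b ha hab hb => ((intervalIntegrable_sub_rpow hr t a b).sub
      (intervalIntegrable_sub_rpow hr s a b)).smul_continuousOn
        (hGc.mono (by rw [uIcc_of_le hab]; exact Icc_subset_Icc ha hb))
  rw [← integral_add_adjacent_intervals (hf 0 (s / 2) le_rfl (by linarith) (by linarith))
    (hf (s / 2) s (by linarith) (by linarith) le_rfl),
    ← integral_add_adjacent_intervals (hf (s / 2) (s - (t - s)) (by linarith) (by linarith)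
      (by linarith)) (hf (s - (t - s)) s (by linarith) (by linarith) le_rfl), ← add_assoc]
  have h₁ := norm_integral_kernel_sub_smul_le_left hα₀ hμ₁ (by linarith) hK hs hst.le hG
  have h₂ := norm_integral_kernel_sub_smul_le_middle hα₀ hμ₀ hK hst hnear hG
  have h₃ := norm_integral_kernel_sub_smul_le_right hα₀.le hμ₀ (by linarith) hK hst.le hnear hG
  have hσ :
      (s / 2) ^ (ν - α - 1) * (s / 2) ^ (1 - μ) = (s / 2) ^ (ν - α) * (s / 2) ^ (-μ) := by
    rw [← Real.rpow_add (by linarith), ← Real.rpow_add (by linarith)]; ring_nf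
  have hδ : (t - s) ^ (ν - α + 1) = (t - s) * (t - s) ^ (ν - α) := by
    rw [Real.rpow_add_one (by linarith)]; ring
  have hR : 0 ≤ ∫ r in (t - s)..s / 2, r ^ (ν - α - 1) :=
    integral_nonneg (by linarith) fun r hr => Real.rpow_nonneg (by linarith [hr.1]) _
  have hP : (s / 2) ^ (-μ) = 2 ^ μ * s ^ (-μ) := by
    rw [Real.div_rpow hs.le zero_le_two, Real.rpow_neg zero_le_two, div_inv_eq_mul, mul_comm]
  set k := α / (1 - μ) + 1 / (ν - α + 1)
  have hαk : α / (1 - μ) ≤ k := le_add_of_nonneg_right (one_div_nonneg.2 (by linarith))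
  calc _ ≤ _ := norm_add₃_le.trans (add_le_add (add_le_add h₁ h₂) h₃)
    _ = K * (s / 2) ^ (-μ) * (α / (1 - μ) * ((t - s) * (s / 2) ^ (ν - α)) +
          α * ((t - s) * ∫ r in (t - s)..s / 2, r ^ (ν - α - 1)) +
          1 / (ν - α + 1) * ((t - s) * (t - s) ^ (ν - α))) := by
        rw [hδ]; linear_combination (K * α * (t - s) / (1 - μ)) * hσ
    _ ≤ K * (s / 2) ^ (-μ) * (k * ((t - s) * (s / 2) ^ (ν - α)) +
          k * ((t - s) * ∫ r in (t - s)..s / 2, r ^ (ν - α - 1)) +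
          k * ((t - s) * (t - s) ^ (ν - α))) := by
        gcongr
        · exact (le_div_self hα₀.le (by linarith) (by linarith)).trans hαk
        · exact le_add_of_nonneg_left (div_nonneg hα₀.le (by linarith))
    _ = _ := by rw [hP]; ring

lemma norm_integral_kernel_sub_smul_le_of_rate {M : ℝ} (hα₀ : 0 < α)
    (hα₁ : α < 1) (hμ₀ : 0 ≤ μ) (hμ₁ : μ < 1) (hν₀ : 0 ≤ ν) (hν₁ : ν ≤ 1) (hK : 0 ≤ K)
    (hs : 0 < s) (hst : s < t) (htT : t ≤ T) (hGc : ContinuousOn G (Icc 0 s))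
    (hGM : ∀ u ∈ Ioo 0 s, ‖G u‖ ≤ M) (hG : ∀ u ∈ Ioo 0 s, ‖G u‖ ≤ K * u ^ (-μ) * (s - u) ^ ν)
    (hc : 0 ≤ c) (hrate : ∀ δ σ, 0 < δ → δ ≤ σ → σ ≤ T →
      δ * σ ^ (ν - α) + δ * ∫ r in δ..σ, r ^ (ν - α - 1) ≤ c * δ ^ β) :
    ‖∫ u in (0 : ℝ)..s, ((t - u) ^ (-α) - (s - u) ^ (-α)) • G u‖ ≤
      M * 3 ^ α / (1 - α) ^ 2 * (t ^ (1 - α) - s ^ (1 - α)) +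
        K * 2 ^ μ * (α / (1 - μ) + 1 / (ν - α + 1)) * (2 * c) * (s ^ (-μ) * (t - s) ^ β) := by
  have hδ : 0 < t - s := sub_pos.2 hst
  have hX : 0 ≤ t ^ (1 - α) - s ^ (1 - α) :=
    sub_nonneg.2 (Real.rpow_le_rpow hs.le hst.le (by linarith))
  have hk : 0 ≤ α / (1 - μ) + 1 / (ν - α + 1) :=
    add_nonneg (div_nonneg hα₀.le (by linarith)) (one_div_nonneg.2 (by linarith))
  have hM : 0 ≤ M := (norm_nonneg _).trans (hGM (s / 2) ⟨by linarith, by linarith⟩)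
  rcases le_or_gt s (2 * (t - s)) with hfar | hnear
  · calc _ ≤ M * ((t - s) ^ (1 - α) / (1 - α)) :=
          norm_integral_kernel_sub_smul_le hα₀.le hα₁ hs hst.le hGM
      _ ≤ M * (3 ^ α / (1 - α) * (t ^ (1 - α) - s ^ (1 - α)) / (1 - α)) :=
          mul_le_mul_of_nonneg_left (div_le_div_of_nonneg_right
            (sub_rpow_le_mul_rpow_sub_rpow hα₀.le hα₁ hs hst (by linarith)) (by linarith)) hM
      _ = M * 3 ^ α / (1 - α) ^ 2 * (t ^ (1 - α) - s ^ (1 - α)) := by field_simp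
      _ ≤ _ := le_add_of_nonneg_right
          (mul_nonneg (mul_nonneg (mul_nonneg (by positivity) hk) (by positivity)) (by positivity))
  · have h₁ := hrate (t - s) (s / 2) hδ (by linarith) (by linarith)
    have h₂ := hrate (t - s) (t - s) hδ le_rfl (by linarith)
    rw [integral_same, mul_zero, add_zero] at h₂
    calc _ ≤ _ := norm_integral_kernel_sub_smul_le_of_near hα₀ hα₁ hμ₀ hμ₁ hν₀ hν₁ hK hst
          hnear.le hGc hG
      _ ≤ K * 2 ^ μ * (α / (1 - μ) + 1 / (ν - α + 1)) * s ^ (-μ) *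
          (c * (t - s) ^ β + c * (t - s) ^ β) := by gcongr
      _ = K * 2 ^ μ * (α / (1 - μ) + 1 / (ν - α + 1)) * (2 * c) *
          (s ^ (-μ) * (t - s) ^ β) := by ring
      _ ≤ _ := le_add_of_nonneg_left (mul_nonneg (by positivity) hX)

theorem exists_norm_singularConv_sub_le [CompleteSpace E] {F : ℝ → E}
    (hα₀ : 0 < α) (hα₁ : α < 1) (hμ₀ : 0 ≤ μ) (hμ₁ : μ < 1) (hν₀ : 0 ≤ ν) (hν₁ : ν ≤ 1)
    (hK : 0 ≤ K) (hFc : ContinuousOn F (Icc 0 T))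
    (hF : ∀ s t, 0 < s → s < t → t ≤ T → ‖F t - F s‖ ≤ K * s ^ (-μ) * (t - s) ^ ν)
    (hrate : ∀ δ σ, 0 < δ → δ ≤ σ → σ ≤ T →
      δ * σ ^ (ν - α) + δ * ∫ r in δ..σ, r ^ (ν - α - 1) ≤ c * δ ^ β) :
    ∃ C > 0, ∀ s t, 0 < s → s < t → t ≤ T →
      ‖singularConv α F t - singularConv α F s‖ ≤
        C * (t ^ (1 - α) - s ^ (1 - α)) + C * s ^ (-μ) * (t - s) ^ β := by
  obtain ⟨M, hM⟩ := isCompact_Icc.exists_bound_of_continuousOn hFc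
  set A := 2 * M * 3 ^ α / (1 - α) ^ 2 + M / (1 - α)
  set B := K * 2 ^ μ * (α / (1 - μ) + 1 / (ν - α + 1)) * (2 * c) + K / (1 - α) * c
  refine ⟨max (max A B) 1, by positivity, fun s t hs hst htT => ?_⟩
  have hδ : 0 < t - s := sub_pos.2 hst
  have hsT : s ≤ T := by linarith
  have hX : 0 ≤ t ^ (1 - α) - s ^ (1 - α) :=
    sub_nonneg.2 (Real.rpow_le_rpow hs.le hst.le (by linarith))
  have hdiag := hrate (t - s) (t - s) hδ le_rfl (by linarith)
  rw [integral_same, mul_zero, add_zero] at hdiag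
  have hc : 0 ≤ c := nonneg_of_mul_nonneg_left ((by positivity : (0:ℝ) ≤ _).trans hdiag)
    (by positivity)
  have h₁ := norm_integral_kernel_sub_smul_le_of_rate (G := fun u => F u - F s) (M := 2 * M)
    hα₀ hα₁ hμ₀ hμ₁ hν₀ hν₁ hK hs hst htT
    ((hFc.mono (Icc_subset_Icc_right hsT)).sub continuousOn_const)
    (fun u hu => (norm_sub_le _ _).trans (by
      linarith [hM u ⟨hu.1.le, by linarith [hu.2]⟩, hM s ⟨hs.le, hsT⟩]))
    (fun u hu => by rw [norm_sub_rev]; exact hF u s hu.1 hu.2 hsT) hc hrate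
  have h₂ := (norm_integral_sub_rpow_smul_le_of_holder hα₁ hν₀ hst (by positivity)
    fun u hu => hF s u hs hu.1 (by linarith [hu.2])).trans
      (mul_le_mul_of_nonneg_left hdiag (div_nonneg (by positivity) (by linarith)))
  have h₃ : ‖((t ^ (1 - α) - s ^ (1 - α)) / (1 - α)) • F s‖ ≤
      M / (1 - α) * (t ^ (1 - α) - s ^ (1 - α)) := by
    rw [norm_smul, Real.norm_of_nonneg (div_nonneg hX (by linarith))]
    calc _ ≤ (t ^ (1 - α) - s ^ (1 - α)) / (1 - α) * M :=
          mul_le_mul_of_nonneg_left (hM s ⟨hs.le, hsT⟩) (div_nonneg hX (by linarith))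
      _ = _ := by ring
  rw [singularConv_sub_eq hα₁ hs.le hst.le (hFc.mono (Icc_subset_Icc_right htT))]
  calc _ ≤ _ := norm_add₃_le.trans (add_le_add (add_le_add h₁ h₂) h₃)
    _ = A * (t ^ (1 - α) - s ^ (1 - α)) + B * (s ^ (-μ) * (t - s) ^ β) := by ring
    _ ≤ _ := by
      rw [mul_assoc (max (max A B) 1)]
      exact add_le_add
        (mul_le_mul_of_nonneg_right ((le_max_left A B).trans (le_max_left _ _)) hX)
        (mul_le_mul_of_nonneg_right ((le_max_right A B).trans (le_max_left _ _)) (by positivity))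

end SingularConvolution

theorem stmt2_general
    {Ω : Type*} [MeasurableSpace Ω] (P : Measure Ω)
    (d : ℕ) (p : ℝ≥0∞) [Fact (1 ≤ p)]
    (T : ℝ) (α : ℝ) (hα : α ∈ Ioo (0:ℝ) 1)
    (F : ℝ → Lp (EuclideanSpace ℝ (Fin d)) p P)
    (hFcont : ContinuousOn F (Icc 0 T))
    (K μ ν : ℝ) (hK : 0 < K) (hμ : μ ∈ Ico (0:ℝ) 1) (hν : ν ∈ Ico (0:ℝ) 1)
    (hF : ∀ s t : ℝ, 0 < s → s < t → t ≤ T →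
      ‖F t - F s‖ ≤ K * s ^ (-μ) * (t - s) ^ ν) :
    ∃ ε₀ > (0:ℝ), ∀ ε : ℝ, 0 < ε → ε < ε₀ → ∃ C > (0:ℝ), ∀ s t : ℝ,
      0 < s → s < t → t ≤ T →
      (ν ≠ α →
        ‖(∫ u in (0:ℝ)..t, ((t - u) ^ (-α)) • F u)
            - ∫ u in (0:ℝ)..s, ((s - u) ^ (-α)) • F u‖
          ≤ C * (t ^ (1 - α) - s ^ (1 - α))
            + C * s ^ (-μ) * (t - s) ^ (min (1 - α + ν) 1)) ∧
      (ν = α →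
        ‖(∫ u in (0:ℝ)..t, ((t - u) ^ (-α)) • F u)
            - ∫ u in (0:ℝ)..s, ((s - u) ^ (-α)) • F u‖
          ≤ C * (t ^ (1 - α) - s ^ (1 - α))
            + C * s ^ (-μ) * (t - s) ^ (1 - ε)) := by
  obtain ⟨hα₀, hα₁⟩ := hα
  obtain ⟨hμ₀, hμ₁⟩ := hμ
  obtain ⟨hν₀, hν₁⟩ := hν
  have key (c β : ℝ) :=
    exists_norm_singularConv_sub_le (c := c) (β := β) hα₀ hα₁ hμ₀ hμ₁ hν₀ hν₁.le hK.le hFcont hF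
  refine ⟨1, one_pos, fun ε hε _ => ?_⟩
  rcases lt_trichotomy ν α with hlt | heq | hgt
  · obtain ⟨C, hC, h⟩ := key _ _ fun δ σ hδ hδσ _ =>
      mul_rpow_add_mul_integral_le_of_neg (sub_neg.2 hlt) hδ hδσ
    refine ⟨C, hC, fun s t hs hst htT => ⟨fun _ => ?_, fun h' => absurd h' hlt.ne⟩⟩
    rw [min_eq_left (by linarith), show 1 - α + ν = 1 + (ν - α) by ring]
    exact h s t hs hst htT
  · obtain ⟨C, hC, h⟩ := key _ _ fun δ σ hδ hδσ hσT =>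
      mul_rpow_add_mul_integral_le_of_eq_zero (sub_eq_zero.2 heq) hε hδ hδσ hσT
    exact ⟨C, hC, fun s t hs hst htT => ⟨fun h' => absurd heq h', fun _ => h s t hs hst htT⟩⟩
  · obtain ⟨C, hC, h⟩ := key _ 1 fun δ σ hδ hδσ hσT =>
      (mul_rpow_add_mul_integral_le_of_pos (sub_pos.2 hgt) hδ hδσ hσT).trans_eq
        (by rw [Real.rpow_one])
    refine ⟨C, hC, fun s t hs hst htT => ⟨fun _ => ?_, fun h' => absurd h' hgt.ne'⟩⟩
    rw [min_eq_right (by linarith)]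
    exact h s t hs hst htT

/-- Regularity of the singular convolution `Λ_F` (Proposition `prop.convo`). -/
theorem stmt2
    {Ω : Type*} [MeasurableSpace Ω] (P : Measure Ω) [IsProbabilityMeasure P]
    (d : ℕ) (hd : 1 ≤ d) (p : ℝ≥0∞) [Fact (1 ≤ p)] (hp : 2 ≤ p)
    (T : ℝ) (hT : 0 < T) (α : ℝ) (hα : α ∈ Ioo (0:ℝ) 1)
    (F : ℝ → Lp (EuclideanSpace ℝ (Fin d)) p P)
    (hFcont : ContinuousOn F (Icc 0 T))
    (K μ ν : ℝ) (hK : 0 < K) (hμ : μ ∈ Ico (0:ℝ) 1) (hν : ν ∈ Ico (0:ℝ) 1)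
    (hF : ∀ s t : ℝ, 0 < s → s < t → t ≤ T →
      ‖F t - F s‖ ≤ K * s ^ (-μ) * (t - s) ^ ν) :
    ∃ ε₀ > (0:ℝ), ∀ ε : ℝ, 0 < ε → ε < ε₀ → ∃ C > (0:ℝ), ∀ s t : ℝ,
      0 < s → s < t → t ≤ T →
      (ν ≠ α →
        ‖(∫ u in (0:ℝ)..t, ((t - u) ^ (-α)) • F u)
            - ∫ u in (0:ℝ)..s, ((s - u) ^ (-α)) • F u‖
          ≤ C * (t ^ (1 - α) - s ^ (1 - α))
            + C * s ^ (-μ) * (t - s) ^ (min (1 - α + ν) 1)) ∧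
      (ν = α →
        ‖(∫ u in (0:ℝ)..t, ((t - u) ^ (-α)) • F u)
            - ∫ u in (0:ℝ)..s, ((s - u) ^ (-α)) • F u‖
          ≤ C * (t ^ (1 - α) - s ^ (1 - α))
            + C * s ^ (-μ) * (t - s) ^ (1 - ε)) :=
  stmt2_general P d p T α hα F hFcont K μ ν hK hμ hν hF
end

section
/- Let T > 0, r ≥ 1 and N ≥ 2 an integer. Then the stepsizes of the graded mesh satisfy h₂ ≤ r·2^{r−1}·h₁, and h_n ≤ 3^{r−1}·h_{n−1} for every n ∈ {3,…,N}. -/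
/-- The graded mesh point `t_n = T * (n/N)^r`. -/
noncomputable def gmesh (T r : ℝ) (N n : ℕ) : ℝ := T * ((n : ℝ) / (N : ℝ)) ^ r

/-!
Since `t_n = (T / N^r) n^r`, both bounds are statements about the differences of `x ↦ x^r` on
consecutive integers. By the mean value theorem `(x+1)^r - x^r` lies between `r x^(r-1)` and
`r (x+1)^(r-1)`, so for `x ≥ 2` it is at most `r (x+1)^(r-1) ≤ r (3(x-1))^(r-1)`, which is
`3^(r-1)` times the lower bound `r (x-1)^(r-1)` for the previous difference.
-/

namespace Real

variable {r a b : ℝ}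

theorem exists_mem_Ioo_rpow_sub_rpow_eq (hr : 1 ≤ r) (hab : a < b) :
    ∃ c ∈ Set.Ioo a b, b ^ r - a ^ r = r * c ^ (r - 1) * (b - a) := by
  have hderiv (x : ℝ) : HasDerivAt (· ^ r) (r * x ^ (r - 1)) x :=
    hasDerivAt_rpow_const (Or.inr hr)
  obtain ⟨c, hc, hslope⟩ := exists_hasDerivAt_eq_slope (· ^ r) (fun x ↦ r * x ^ (r - 1)) hab
    (fun x _ ↦ (hderiv x).continuousAt.continuousWithinAt) (fun x _ ↦ hderiv x)
  refine ⟨c, hc, ?_⟩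
  rw [hslope, div_mul_cancel₀ _ (sub_ne_zero.2 hab.ne')]

theorem rpow_sub_rpow_le_of_one_le (hr : 1 ≤ r) (ha : 0 ≤ a) (hab : a ≤ b) :
    b ^ r - a ^ r ≤ r * b ^ (r - 1) * (b - a) := by
  rcases hab.eq_or_lt with rfl | hab
  · simp
  obtain ⟨c, ⟨hac, hcb⟩, heq⟩ := exists_mem_Ioo_rpow_sub_rpow_eq hr hab
  rw [heq]
  gcongr
  linarith

theorem mul_rpow_sub_one_mul_sub_le_rpow_sub_rpow (hr : 1 ≤ r) (ha : 0 ≤ a) (hab : a ≤ b) :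
    r * a ^ (r - 1) * (b - a) ≤ b ^ r - a ^ r := by
  rcases hab.eq_or_lt with rfl | hab
  · simp
  obtain ⟨c, ⟨hac, -⟩, heq⟩ := exists_mem_Ioo_rpow_sub_rpow_eq hr hab
  rw [heq]
  gcongr

theorem rpow_add_one_sub_rpow_le (hr : 1 ≤ r) {x : ℝ} (hx : 2 ≤ x) :
    (x + 1) ^ r - x ^ r ≤ 3 ^ (r - 1) * (x ^ r - (x - 1) ^ r) := by
  have hx₁ : 0 ≤ x - 1 := by linarith
  calc (x + 1) ^ r - x ^ r ≤ r * (x + 1) ^ (r - 1) * ((x + 1) - x) :=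
        rpow_sub_rpow_le_of_one_le hr (by linarith) (by linarith)
    _ ≤ r * (3 * (x - 1)) ^ (r - 1) * (x - (x - 1)) := by
        rw [show x + 1 - x = x - (x - 1) by ring]
        gcongr <;> linarith
    _ = 3 ^ (r - 1) * (r * (x - 1) ^ (r - 1) * (x - (x - 1))) := by
        rw [mul_rpow (by norm_num) hx₁]; ring
    _ ≤ 3 ^ (r - 1) * (x ^ r - (x - 1) ^ r) := by
        gcongr
        exact mul_rpow_sub_one_mul_sub_le_rpow_sub_rpow hr hx₁ (by linarith)

end Real

theorem gmesh_eq_mul_rpow {T r : ℝ} (N n : ℕ) :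
    gmesh T r N n = T / (N : ℝ) ^ r * (n : ℝ) ^ r := by
  rw [gmesh, Real.div_rpow (Nat.cast_nonneg n) (Nat.cast_nonneg N)]
  ring

theorem stmt7_general (T r : ℝ) (hT : 0 < T) (hr : 1 ≤ r) (N : ℕ) :
    gmesh T r N 2 - gmesh T r N 1
      ≤ r * (2:ℝ) ^ (r - 1) * (gmesh T r N 1 - gmesh T r N 0) ∧
    ∀ n : ℕ, 3 ≤ n → n ≤ N →
      gmesh T r N n - gmesh T r N (n - 1)
        ≤ (3:ℝ) ^ (r - 1) * (gmesh T r N (n - 1) - gmesh T r N (n - 2)) := by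
  have hC : 0 ≤ T / (N : ℝ) ^ r := by positivity
  simp only [gmesh_eq_mul_rpow, ← mul_sub]
  constructor
  · have h := Real.rpow_sub_rpow_le_of_one_le hr zero_le_one one_le_two
    rw [Nat.cast_ofNat, Nat.cast_one, Nat.cast_zero, Real.zero_rpow (by linarith), sub_zero,
      mul_left_comm]
    gcongr
    norm_num at h ⊢
    exact h
  · rintro n hn -
    have h := Real.rpow_add_one_sub_rpow_le hr (x := (n : ℝ) - 1) (by
      have : (3 : ℝ) ≤ n := by exact_mod_cast hn
      linarith)
    rw [sub_add_cancel] at h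
    rw [Nat.cast_sub (by omega : 1 ≤ n), Nat.cast_sub (by omega : 2 ≤ n), Nat.cast_one,
      Nat.cast_two, show (n : ℝ) - 2 = n - 1 - 1 by ring, mul_left_comm]
    gcongr

/-- Consecutive stepsize comparison on the graded mesh (equation `eq.LaterStepFormerStep`). -/
theorem stmt7 (T r : ℝ) (hT : 0 < T) (hr : 1 ≤ r) (N : ℕ) (hN : 2 ≤ N) :
    gmesh T r N 2 - gmesh T r N 1
      ≤ r * (2:ℝ) ^ (r - 1) * (gmesh T r N 1 - gmesh T r N 0) ∧
    ∀ n : ℕ, 3 ≤ n → n ≤ N →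
      gmesh T r N n - gmesh T r N (n - 1)
        ≤ (3:ℝ) ^ (r - 1) * (gmesh T r N (n - 1) - gmesh T r N (n - 2)) :=
  stmt7_general T r hT hr N
end

section
/- Let T > 0, r ≥ 1 and N ≥ 1 an integer. Then for every n ∈ {1,…,N} and every k ∈ {0,1,…,n−1}, the graded mesh points satisfy t_n − t_{k+1} ≥ r·T·N^{−r}·(k+1)^{r−1}·(n−k−1). -/
/-- Lower bound on the distance between graded-mesh points (equation `eq.multiSize`). -/
theorem stmt8 (T r : ℝ) (hT : 0 < T) (hr : 1 ≤ r) (N : ℕ) (hN : 1 ≤ N) :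
    ∀ n : ℕ, 1 ≤ n → n ≤ N → ∀ k : ℕ, k < n →
      gmesh T r N n - gmesh T r N (k + 1)
        ≥ r * T * (N : ℝ) ^ (-r) * ((k : ℝ) + 1) ^ (r - 1) * ((n : ℝ) - (k : ℝ) - 1) := by
  intro n hn hnN k hk
  have hN0 : (0 : ℝ) < (N : ℝ) := by exact_mod_cast Nat.lt_of_lt_of_le Nat.zero_lt_one hN
  set x : ℝ := (n : ℝ) / N with hxdef
  set y : ℝ := ((k : ℝ) + 1) / N with hydef
  have hy0 : 0 < y := by positivity
  have hk1n : ((k : ℝ) + 1) ≤ (n : ℝ) := by exact_mod_cast hk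
  -- Bernoulli with s = x/y - 1
  have hs : -1 ≤ x / y - 1 := by
    have : 0 ≤ x / y := by positivity
    linarith
  have hB := one_add_mul_self_le_rpow_one_add hs hr
  rw [add_sub_cancel] at hB
  have hxy : (x / y) ^ r = x ^ r / y ^ r := by
    rw [Real.div_rpow (by positivity) hy0.le]
  have key : r * y ^ (r - 1) * (x - y) ≤ x ^ r - y ^ r := by
    have h1 : y ^ r * (1 + r * (x / y - 1)) ≤ y ^ r * (x / y) ^ r := by
      apply mul_le_mul_of_nonneg_left hB (by positivity)
    rw [hxy, mul_div_cancel₀ _ (by positivity : y ^ r ≠ 0)] at h1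
    have h2 : y ^ r * (x / y - 1) = y ^ (r - 1) * (x - y) := by
      have hyr : y ^ r = y ^ (r - 1) * y := by
        rw [← Real.rpow_add_one hy0.ne' (r - 1), sub_add_cancel]
      rw [hyr]
      field_simp
    nlinarith [h1, h2]
  -- translate to gmesh
  have hlhs : gmesh T r N n - gmesh T r N (k + 1) = T * (x ^ r - y ^ r) := by
    simp only [gmesh, hxdef, hydef]
    push_cast
    ring
  have hrhs : r * T * (N : ℝ) ^ (-r) * ((k : ℝ) + 1) ^ (r - 1) * ((n : ℝ) - (k : ℝ) - 1)
      = T * (r * y ^ (r - 1) * (x - y)) := by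
    have hy' : y ^ (r - 1) = ((k : ℝ) + 1) ^ (r - 1) / (N : ℝ) ^ (r - 1) := by
      rw [hydef, Real.div_rpow (by positivity) hN0.le]
    have hxsub : x - y = ((n : ℝ) - (k : ℝ) - 1) / N := by
      rw [hxdef, hydef]; field_simp; ring
    have hNr : (N : ℝ) ^ (-r) = ((N : ℝ) ^ (r - 1) * (N : ℝ))⁻¹ := by
      rw [← Real.rpow_add_one hN0.ne' (r - 1), sub_add_cancel, Real.rpow_neg hN0.le]
    rw [hy', hxsub, hNr]
    have h1 : (N : ℝ) ^ (r - 1) ≠ 0 := by positivity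
    field_simp
  rw [hlhs, hrhs, ge_iff_le]
  exact mul_le_mul_of_nonneg_left key hT.le
end

section
/- Let T > 0, r ≥ 1 and N ≥ 1 an integer. Then for every real number c and every s ∈ [t₁, T), one has ŝ^c ≤ max{1, 2^{−r c}}·s^c, where ŝ is the left graded-mesh point of s. -/
/-- Comparison of the left mesh point with the point itself (equation `eq.s`). -/
theorem stmt9 (T r : ℝ) (hT : 0 < T) (hr : 1 ≤ r) (N : ℕ) (hN : 1 ≤ N)
    (hat : ℝ → ℝ)
    (hhat : ∀ i : ℕ, i < N →
      ∀ s ∈ Set.Ico (gmesh T r N i) (gmesh T r N (i + 1)), hat s = gmesh T r N i) :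
    ∀ c s : ℝ, gmesh T r N 1 ≤ s → s < T →
      hat s ^ c ≤ max 1 ((2:ℝ) ^ (-(r * c))) * s ^ c := by
  intro c s hs1 hsT
  classical
  have hr0 : 0 ≤ r := le_trans zero_le_one hr
  have hNpos : (0:ℝ) < N := by exact_mod_cast Nat.lt_of_lt_of_le Nat.zero_lt_one hN
  have hN0 : (N:ℝ) ≠ 0 := ne_of_gt hNpos
  set P : ℕ → Prop := fun n => gmesh T r N n ≤ s with hP
  set i := Nat.findGreatest P N with hidef
  have hP1 : P 1 := hs1
  have hiP : P i := Nat.findGreatest_spec hN hP1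
  have hi1 : 1 ≤ i := Nat.le_findGreatest hN hP1
  have htN : gmesh T r N N = T := by
    unfold gmesh; rw [div_self hN0, Real.one_rpow, mul_one]
  have hiN : i < N := by
    rcases lt_or_eq_of_le (Nat.findGreatest_le N : i ≤ N) with h | h
    · exact h
    · exfalso
      have h2 := hiP
      rw [hP] at h2
      rw [show i = N from h, htN] at h2
      exact absurd h2 (not_le.mpr hsT)
  have hslt : s < gmesh T r N (i + 1) := by
    by_contra h
    push_neg at h
    have := Nat.le_findGreatest (Nat.succ_le_of_lt hiN) (show P (i + 1) from h)
    omega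
  have hhat' : hat s = gmesh T r N i := hhat i hiN s ⟨hiP, hslt⟩
  rw [hhat']
  have hipos : (0:ℝ) < (i:ℝ) / N := by
    apply div_pos _ hNpos
    exact_mod_cast Nat.lt_of_lt_of_le Nat.zero_lt_one hi1
  have hti_pos : 0 < gmesh T r N i := by
    unfold gmesh
    exact mul_pos hT (Real.rpow_pos_of_pos hipos r)
  have hs_pos : 0 < s := lt_of_lt_of_le hti_pos hiP
  have hkey : s ≤ 2 ^ r * gmesh T r N i := by
    have hic : (1:ℝ) ≤ (i:ℝ) := by exact_mod_cast hi1
    have h1 : gmesh T r N (i + 1) ≤ 2 ^ r * gmesh T r N i := by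
      unfold gmesh
      have hb : ((i:ℝ) + 1) / N ≤ (2 * (i:ℝ)) / N := by
        gcongr
        linarith
      have hb' : (((i:ℕ) + 1 : ℕ) : ℝ) / N ≤ (2 * (i:ℝ)) / N := by
        push_cast; linarith [hb]
      calc T * (((i + 1 : ℕ) : ℝ) / N) ^ r
          ≤ T * ((2 * (i:ℝ)) / N) ^ r := by
            apply mul_le_mul_of_nonneg_left _ hT.le
            apply Real.rpow_le_rpow (by positivity) hb' hr0
        _ = 2 ^ r * (T * ((i:ℝ) / N) ^ r) := by
            rw [mul_div_assoc, Real.mul_rpow (by norm_num) hipos.le]; ring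
    linarith [hslt]
  rcases le_or_gt 0 c with hc | hc
  · have h1 : gmesh T r N i ^ c ≤ s ^ c := Real.rpow_le_rpow hti_pos.le hiP hc
    have h2 : (1:ℝ) ≤ max 1 ((2:ℝ) ^ (-(r * c))) := le_max_left _ _
    have h3 : (0:ℝ) ≤ s ^ c := Real.rpow_nonneg hs_pos.le c
    nlinarith
  · have hle : (2:ℝ) ^ (-r) * s ≤ gmesh T r N i := by
      have h2r : (0:ℝ) < 2 ^ r := Real.rpow_pos_of_pos (by norm_num) r
      rw [Real.rpow_neg (by norm_num : (0:ℝ) ≤ 2)]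
      rw [inv_mul_le_iff₀ h2r]
      linarith [hkey]
    have h1 : gmesh T r N i ^ c ≤ ((2:ℝ) ^ (-r) * s) ^ c := by
      apply Real.rpow_le_rpow_of_nonpos _ hle hc.le
      positivity
    have h2 : ((2:ℝ) ^ (-r) * s) ^ c = (2:ℝ) ^ (-(r * c)) * s ^ c := by
      rw [Real.mul_rpow (by positivity) hs_pos.le,
        ← Real.rpow_mul (by norm_num : (0:ℝ) ≤ 2), neg_mul]
    have h3 : (2:ℝ) ^ (-(r * c)) ≤ max 1 ((2:ℝ) ^ (-(r * c))) := le_max_right _ _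
    have h4 : (0:ℝ) ≤ s ^ c := Real.rpow_nonneg hs_pos.le c
    rw [h2] at h1
    nlinarith
end

section
/- Let T > 0, r ≥ 1, α ∈ (0,1), β ∈ (0,1/2), and set ρ := min{1−α, 1/2−β}. Then there exists a constant C > 0, independent of N and n, such that for every integer N ≥ 1 and every n ∈ {1,…,N}, ∫_0^{t₁} (t_n − s)^{−α}·s^{ρ} ds ≤ C·t_n^{1−α+ρ−(1/2−β)/r}·N^{−(1/2−β)}. -/
open Real Set intervalIntegral

section SingularIntegral

variable {a b α ρ : ℝ}

theorem integral_self_sub_rpow_mul_rpow_le (ha : 0 ≤ a) (hα : α < 1) (hρ : 0 ≤ ρ) :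
    ∫ s in 0..a, (a - s) ^ (-α) * s ^ ρ ≤ a ^ (1 - α + ρ) / (1 - α) := by
  have hsing : IntervalIntegrable (fun s => (a - s) ^ (-α)) MeasureTheory.volume 0 a := by
    simpa using ((intervalIntegrable_rpow' (a := 0) (b := a)
      (by linarith : (-1 : ℝ) < -α)).comp_sub_left a).symm
  have hcont : Continuous fun s : ℝ => s ^ ρ := continuous_id.rpow_const fun _ => Or.inr hρ
  have hsing_int : ∫ s in 0..a, (a - s) ^ (-α) = a ^ (1 - α) / (1 - α) := by
    rw [integral_comp_sub_left (fun x => x ^ (-α)) a, sub_self, sub_zero,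
      integral_rpow (Or.inl (by linarith)), zero_rpow (by linarith), sub_zero, neg_add_eq_sub]
  calc ∫ s in 0..a, (a - s) ^ (-α) * s ^ ρ
      ≤ ∫ s in 0..a, (a - s) ^ (-α) * a ^ ρ := by
        refine integral_mono_on ha (hsing.mul_continuousOn hcont.continuousOn)
          (hsing.mul_const _) fun s hs => ?_
        exact mul_le_mul_of_nonneg_left (rpow_le_rpow hs.1 hs.2 hρ)
          (rpow_nonneg (sub_nonneg.2 hs.2) _)
    _ = a ^ (1 - α + ρ) / (1 - α) := by
        rw [integral_mul_const, hsing_int, rpow_add' ha (by linarith)]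
        ring

theorem integral_sub_rpow_mul_rpow_le_of_lt (ha : 0 ≤ a) (hab : a < b) (hα : 0 ≤ α)
    (hρ : -1 < ρ) :
    ∫ s in 0..a, (b - s) ^ (-α) * s ^ ρ ≤ (b - a) ^ (-α) * (a ^ (ρ + 1) / (ρ + 1)) := by
  have hρint : IntervalIntegrable (fun s : ℝ => s ^ ρ) MeasureTheory.volume 0 a :=
    intervalIntegrable_rpow' hρ
  have hweight : ContinuousOn (fun s : ℝ => (b - s) ^ (-α)) (uIcc 0 a) := by
    refine (continuous_const.sub continuous_id).continuousOn.rpow_const fun s hs => ?_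
    rw [uIcc_of_le ha] at hs
    exact Or.inl (sub_ne_zero.2 (ne_of_gt (hs.2.trans_lt hab)))
  calc ∫ s in 0..a, (b - s) ^ (-α) * s ^ ρ
      ≤ ∫ s in 0..a, (b - a) ^ (-α) * s ^ ρ := by
        refine integral_mono_on ha (hρint.continuousOn_mul hweight) (hρint.const_mul _)
          fun s hs => ?_
        exact mul_le_mul_of_nonneg_right
          (rpow_le_rpow_of_nonpos (by linarith) (by linarith [hs.2]) (by linarith))
          (rpow_nonneg hs.1 _)
    _ = (b - a) ^ (-α) * (a ^ (ρ + 1) / (ρ + 1)) := by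
        rw [integral_const_mul, integral_rpow (Or.inl hρ), zero_rpow (by linarith), sub_zero]

theorem integral_sub_rpow_mul_rpow_le (ha : 0 < a) (hab : b = a ∨ 2 * a ≤ b) (hα₀ : 0 ≤ α)
    (hα₁ : α < 1) (hρ : 0 ≤ ρ) {e : ℝ} (he : e ≤ 1 + ρ) :
    ∫ s in 0..a, (b - s) ^ (-α) * s ^ ρ
      ≤ (1 / (1 - α) + 2 ^ α / (ρ + 1)) * (b ^ (1 - α + ρ - e) * a ^ e) := by
  have hdiag : 0 ≤ 1 / (1 - α) := by rw [one_div_nonneg]; linarith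
  have hfar : 0 ≤ 2 ^ α / (ρ + 1) := by positivity
  rcases hab with rfl | hab
  · calc ∫ s in 0..b, (b - s) ^ (-α) * s ^ ρ
        ≤ b ^ (1 - α + ρ) / (1 - α) := integral_self_sub_rpow_mul_rpow_le ha.le hα₁ hρ
      _ = 1 / (1 - α) * (b ^ (1 - α + ρ - e) * b ^ e) := by
          rw [← rpow_add ha, sub_add_cancel]; ring
      _ ≤ _ := by gcongr; linarith
  · have hb : 0 < b := by linarith
    have hhalf : b / 2 ≤ b - a := by linarith
    calc ∫ s in 0..a, (b - s) ^ (-α) * s ^ ρ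
        ≤ (b - a) ^ (-α) * (a ^ (ρ + 1) / (ρ + 1)) :=
          integral_sub_rpow_mul_rpow_le_of_lt ha.le (by linarith) hα₀ (by linarith)
      _ ≤ (b / 2) ^ (-α) * (b ^ (ρ + 1 - e) * a ^ e / (ρ + 1)) := by
          have hpow : a ^ (ρ + 1) ≤ b ^ (ρ + 1 - e) * a ^ e := by
            rw [← sub_add_cancel (ρ + 1) e, rpow_add ha, add_sub_cancel_right]
            gcongr
            · linarith
            · linarith
          gcongr ?_ * ?_
          · exact rpow_le_rpow_of_nonpos (by positivity) hhalf (by linarith)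
          · gcongr
      _ = 2 ^ α / (ρ + 1) * (b ^ (1 - α + ρ - e) * a ^ e) := by
          rw [div_rpow hb.le zero_le_two, rpow_neg zero_le_two, div_inv_eq_mul,
            show 1 - α + ρ - e = -α + (ρ + 1 - e) by ring, rpow_add hb]
          ring
      _ ≤ _ := by gcongr; linarith

end SingularIntegral

section GradedMesh

variable {T r : ℝ} {N n : ℕ}

theorem gmesh_pos (hT : 0 < T) (hN : 0 < N) (hn : 0 < n) : 0 < gmesh T r N n := by
  unfold gmesh; positivity

theorem gmesh_eq_rpow_mul_gmesh_one : gmesh T r N n = (n : ℝ) ^ r * gmesh T r N 1 := by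
  simp only [gmesh, Nat.cast_one]
  rw [div_eq_mul_one_div (n : ℝ), mul_rpow n.cast_nonneg (by positivity)]
  ring

theorem gmesh_eq_or_two_mul_le (hT : 0 ≤ T) (hr : 1 ≤ r) (hn : 1 ≤ n) :
    gmesh T r N n = gmesh T r N 1 ∨ 2 * gmesh T r N 1 ≤ gmesh T r N n := by
  rcases hn.eq_or_lt with rfl | hn
  · exact Or.inl rfl
  · right
    have htwo : (2 : ℝ) ≤ (n : ℝ) ^ r :=
      calc (2 : ℝ) = 2 ^ (1 : ℝ) := (rpow_one 2).symm
        _ ≤ 2 ^ r := rpow_le_rpow_of_exponent_le one_le_two hr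
        _ ≤ (n : ℝ) ^ r := rpow_le_rpow zero_le_two (by exact_mod_cast hn) (by linarith)
    rw [gmesh_eq_rpow_mul_gmesh_one (n := n)]
    exact mul_le_mul_of_nonneg_right htwo (by unfold gmesh; positivity)

theorem gmesh_one_rpow_div (hT : 0 ≤ T) (hr : r ≠ 0) (c : ℝ) :
    gmesh T r N 1 ^ (c / r) = T ^ (c / r) * (N : ℝ) ^ (-c) := by
  rw [gmesh, Nat.cast_one, mul_rpow hT (by positivity), ← rpow_mul (by positivity),
    mul_div_cancel₀ _ hr, one_div, inv_rpow N.cast_nonneg, ← rpow_neg N.cast_nonneg]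

end GradedMesh

/-- Bound for the initial-interval integral in the EM error analysis (equation `eq.rho`). -/
theorem stmt11 (T r α β : ℝ) (hT : 0 < T) (hr : 1 ≤ r)
    (hα : α ∈ Set.Ioo (0:ℝ) 1) (hβ : β ∈ Set.Ioo (0:ℝ) (1/2))
    (ρ : ℝ) (hρ : ρ = min (1 - α) (1/2 - β)) :
    ∃ C > (0:ℝ), ∀ N : ℕ, 1 ≤ N → ∀ n : ℕ, 1 ≤ n → n ≤ N →
      (∫ s in (0:ℝ)..(gmesh T r N 1), (gmesh T r N n - s) ^ (-α) * s ^ ρ)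
        ≤ C * (gmesh T r N n) ^ (1 - α + ρ - (1/2 - β) / r) * (N : ℝ) ^ (-(1/2 - β)) := by
  obtain ⟨hα₀, hα₁⟩ := hα
  obtain ⟨hβ₀, hβ₁⟩ := hβ
  have hρ₀ : 0 ≤ ρ := hρ ▸ le_min (by linarith) (by linarith)
  have he : (1/2 - β) / r ≤ 1 + ρ := (div_le_self (by linarith) hr).trans (by linarith)
  refine ⟨T ^ ((1/2 - β) / r) * (1 / (1 - α) + 2 ^ α / (ρ + 1)), by positivity, ?_⟩
  intro N hN n hn _
  have key := integral_sub_rpow_mul_rpow_le (gmesh_pos hT hN one_pos)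
    (gmesh_eq_or_two_mul_le hT.le hr hn) hα₀.le hα₁ hρ₀ he
  rw [gmesh_one_rpow_div hT.le (by linarith)] at key
  linarith
end

section
/- Let T > 0, r ≥ 1 and β ∈ (0,1/2). Then there exists a constant C > 0, independent of N and n, such that for every integer N ≥ 1 and every n ∈ {1,…,N}, ∫_0^{t_n} |(t_n − s)^{−β} − (t_n − ŝ)^{−β}|² ds ≤ C·N^{−(1−2β)}, where ŝ is the left graded-mesh point of s. -/
/-!
For `s` in the `i`-th mesh cell the lag `s - ŝ` is at most the step `t_{i+1} - t_i`, and every step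
of the graded mesh is at most `h = r T / N`. With `x = t_n - s`, the integrand is at most
`x ^ (-2β)` and, by the mean value theorem, at most `2β h x ^ (-2β-1)`. Integrating the first bound
over `x ≤ h` and the second over `x ≥ h` gives `(1 / (1 - 2β) + 1) h ^ (1 - 2β)`, independently of
`t_n`.
-/

open MeasureTheory Real Set intervalIntegral

lemma rpow_sub_rpow_le_mul_sub {r a b : ℝ} (hr : 1 ≤ r) (ha : 0 ≤ a) (hab : a ≤ b) (hb : b ≤ 1) :
    b ^ r - a ^ r ≤ r * (b - a) := by
  refine (convex_Icc (0 : ℝ) 1).image_sub_le_mul_sub_of_deriv_le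
    (continuous_rpow_const (by linarith)).continuousOn (fun y _ => ?_) (fun y hy => ?_)
    a ⟨ha, hab.trans hb⟩ b ⟨ha.trans hab, hb⟩ hab
  · exact (hasDerivAt_rpow_const (Or.inr hr)).differentiableAt.differentiableWithinAt
  · rw [interior_Icc] at hy
    rw [Real.deriv_rpow_const]
    exact mul_le_of_le_one_right (by linarith) (rpow_le_one hy.1.le hy.2.le (by linarith))

lemma rpow_neg_sub_rpow_neg_le_s13 {p x b : ℝ} (hp : 0 ≤ p) (hx : 0 < x) (hxb : x ≤ b) :
    x ^ (-p) - b ^ (-p) ≤ p * (b - x) * x ^ (-p - 1) := by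
  have hne : ∀ y ∈ Icc x b, y ≠ 0 := fun y hy => (hx.trans_le hy.1).ne'
  have := (convex_Icc x b).mul_sub_le_image_sub_of_le_deriv (f := fun y => y ^ (-p))
    (continuousOn_id.rpow_const fun y hy => Or.inl (hne y hy))
    (fun y hy => (hasDerivAt_rpow_const
      (Or.inl (hne y (interior_subset hy)))).differentiableAt.differentiableWithinAt)
    (C := -p * x ^ (-p - 1)) (fun y hy => ?_) x ⟨le_rfl, hxb⟩ b ⟨hxb, le_rfl⟩ hxb
  · linarith
  · rw [interior_Icc] at hy
    rw [Real.deriv_rpow_const, neg_mul, neg_mul, neg_le_neg_iff]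
    exact mul_le_mul_of_nonneg_left (rpow_le_rpow_of_nonpos hx hy.1.le (by linarith)) hp

lemma sq_rpow_neg_sub_rpow_neg_le_min {β h x b : ℝ} (hβ : 0 ≤ β) (hx : 0 < x) (hxb : x ≤ b)
    (hbx : b - x ≤ h) :
    |x ^ (-β) - b ^ (-β)| ^ 2 ≤ min (x ^ (-(2 * β))) (2 * β * h * x ^ (-(2 * β) - 1)) := by
  have hsq : ∀ y : ℝ, 0 < y → (y ^ (-β)) ^ 2 = y ^ (-(2 * β)) := fun y hy => by
    rw [← rpow_natCast, ← rpow_mul hy.le]; ring_nf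
  have hb : 0 < b := hx.trans_le hxb
  have hmono : b ^ (-β) ≤ x ^ (-β) := rpow_le_rpow_of_nonpos hx hxb (by linarith)
  -- `(a - c) ^ 2 ≤ a ^ 2 - c ^ 2` for `0 ≤ c ≤ a`
  have hdiff : |x ^ (-β) - b ^ (-β)| ^ 2 ≤ x ^ (-(2 * β)) - b ^ (-(2 * β)) := by
    rw [sq_abs, ← hsq x hx, ← hsq b hb]
    nlinarith [rpow_nonneg hb.le (-β)]
  refine le_min (hdiff.trans (sub_le_self _ (rpow_nonneg hb.le _))) (hdiff.trans ?_)
  calc x ^ (-(2 * β)) - b ^ (-(2 * β)) ≤ 2 * β * (b - x) * x ^ (-(2 * β) - 1) :=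
        rpow_neg_sub_rpow_neg_le_s13 (by linarith) hx hxb
    _ ≤ 2 * β * h * x ^ (-(2 * β) - 1) := by gcongr

lemma intervalIntegrable_min_rpow_neg {p h u : ℝ} (hp0 : 0 ≤ p) (hp1 : p < 1) (hh : 0 ≤ h)
    (hu : 0 ≤ u) :
    IntervalIntegrable (fun x => min (x ^ (-p)) (p * h * x ^ (-p - 1))) volume 0 u := by
  refine (intervalIntegrable_rpow' (by linarith : -1 < -p)).mono_fun' (by fun_prop) ?_
  rw [uIoc_of_le hu]
  refine (ae_restrict_mem measurableSet_Ioc).mono fun x hx => ?_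
  have hx0 : 0 ≤ x := hx.1.le
  dsimp only
  rw [Real.norm_of_nonneg (le_min (by positivity) (by positivity))]
  exact min_le_left _ _

lemma integral_min_rpow_neg_le {p h u : ℝ} (hp0 : 0 < p) (hp1 : p < 1) (hh : 0 < h)
    (hu : 0 ≤ u) :
    ∫ x in (0 : ℝ)..u, min (x ^ (-p)) (p * h * x ^ (-p - 1)) ≤
      (1 / (1 - p) + 1) * h ^ (1 - p) := by
  set v := max u h
  have hv : 0 ≤ v := hu.trans (le_max_left u h)
  have hhv : h ∈ uIcc 0 v := mem_uIcc_of_le hh.le (le_max_right u h)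
  have hint := intervalIntegrable_min_rpow_neg hp0.le hp1 hh.le hv
  have hint₁ := hint.mono_set (uIcc_subset_uIcc left_mem_uIcc hhv)
  have hint₂ := hint.mono_set (uIcc_subset_uIcc hhv right_mem_uIcc)
  have h0 : (0 : ℝ) ∉ uIcc h v := fun h0 => by
    linarith [(uIcc_of_le (le_max_right u h) ▸ h0).1]
  have hhead : ∫ x in (0 : ℝ)..h, x ^ (-p) = h ^ (1 - p) / (1 - p) := by
    rw [integral_rpow (Or.inl (by linarith)), zero_rpow (by linarith), sub_zero]; ring_nf
  have htail : ∫ x in h..v, p * h * x ^ (-p - 1) = h * (h ^ (-p) - v ^ (-p)) := by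
    rw [intervalIntegral.integral_const_mul, integral_rpow (Or.inr ⟨by intro hp; linarith, h0⟩),
      show -p - 1 + 1 = -p by ring]
    field_simp
    ring
  have hnonneg : 0 ≤ᵐ[volume.restrict (Ioc 0 v)]
      fun x => min (x ^ (-p)) (p * h * x ^ (-p - 1)) := by
    filter_upwards [ae_restrict_mem measurableSet_Ioc] with x hx
    have := hx.1.le
    exact le_min (by positivity) (by positivity)
  calc ∫ x in (0 : ℝ)..u, min (x ^ (-p)) (p * h * x ^ (-p - 1))
      ≤ ∫ x in (0 : ℝ)..v, min (x ^ (-p)) (p * h * x ^ (-p - 1)) :=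
        integral_mono_interval le_rfl hu (le_max_left u h) hnonneg hint
    _ = (∫ x in (0 : ℝ)..h, min (x ^ (-p)) (p * h * x ^ (-p - 1)))
          + ∫ x in h..v, min (x ^ (-p)) (p * h * x ^ (-p - 1)) :=
        (integral_add_adjacent_intervals hint₁ hint₂).symm
    _ ≤ (∫ x in (0 : ℝ)..h, x ^ (-p)) + ∫ x in h..v, p * h * x ^ (-p - 1) := by
        gcongr
        · exact integral_mono_on hh.le hint₁ (intervalIntegrable_rpow' (by linarith))
            fun x _ => min_le_left _ _
        · exact integral_mono_on (le_max_right u h) hint₂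
            ((intervalIntegrable_rpow (Or.inr h0)).const_mul _) fun x _ => min_le_right _ _
    _ ≤ (1 / (1 - p) + 1) * h ^ (1 - p) := by
        have hpow : h * h ^ (-p) = h ^ (1 - p) := by
          rw [sub_eq_neg_add, rpow_add_one hh.ne', mul_comm]
        rw [hhead, htail, mul_sub, hpow, add_mul, one_div_mul_eq_div, one_mul]
        have : 0 ≤ h * v ^ (-p) := by positivity
        linarith

theorem integral_sq_rpow_neg_sub_le {β h t : ℝ} (ŝ : ℝ → ℝ) (hβ0 : 0 < β) (hβ1 : β < 1 / 2)
    (hh : 0 < h) (ht : 0 ≤ t) (hŝ : ∀ s ∈ Ico 0 t, s - ŝ s ∈ Icc 0 h) :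
    ∫ s in (0 : ℝ)..t, |(t - s) ^ (-β) - (t - ŝ s) ^ (-β)| ^ 2 ≤
      (1 / (1 - 2 * β) + 1) * h ^ (1 - 2 * β) := by
  set M : ℝ → ℝ := fun x => min (x ^ (-(2 * β))) (2 * β * h * x ^ (-(2 * β) - 1))
  have hM : IntervalIntegrable M volume 0 t :=
    intervalIntegrable_min_rpow_neg (by linarith) (by linarith) hh.le ht
  have hMrefl : IntervalIntegrable (fun s => M (t - s)) volume 0 t := by
    simpa using (hM.comp_sub_left t).symm
  calc ∫ s in (0 : ℝ)..t, |(t - s) ^ (-β) - (t - ŝ s) ^ (-β)| ^ 2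
      ≤ ∫ s in (0 : ℝ)..t, M (t - s) := by
        rw [integral_of_le ht, integral_of_le ht, integral_Ioc_eq_integral_Ioo,
          integral_Ioc_eq_integral_Ioo]
        refine integral_mono_of_nonneg (Filter.Eventually.of_forall fun s => by positivity)
          (hMrefl.1.mono_set Ioo_subset_Ioc_self) ?_
        filter_upwards [ae_restrict_mem measurableSet_Ioo] with s hs
        obtain ⟨hlag₀, hlag⟩ := hŝ s ⟨hs.1.le, hs.2⟩
        exact sq_rpow_neg_sub_rpow_neg_le_min hβ0.le (sub_pos.2 hs.2) (by linarith)
          (by linarith)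
    _ = ∫ x in (0 : ℝ)..t, M x := by rw [integral_comp_sub_left]; simp
    _ ≤ (1 / (1 - 2 * β) + 1) * h ^ (1 - 2 * β) :=
        integral_min_rpow_neg_le (by linarith) (by linarith) hh ht

lemma gmesh_zero (T : ℝ) {r : ℝ} (hr : r ≠ 0) (N : ℕ) : gmesh T r N 0 = 0 := by
  simp [gmesh, zero_rpow hr]

lemma gmesh_nonneg {T : ℝ} (hT : 0 ≤ T) (r : ℝ) (N n : ℕ) : 0 ≤ gmesh T r N n := by
  unfold gmesh; positivity

lemma gmesh_succ_sub_le {T r : ℝ} (hT : 0 ≤ T) (hr : 1 ≤ r) {N i : ℕ} (hi : i < N) :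
    gmesh T r N (i + 1) - gmesh T r N i ≤ r * T / N := by
  have hN : (0 : ℝ) < N := by exact_mod_cast (Nat.zero_le i).trans_lt hi
  have hiN : (i : ℝ) + 1 ≤ N := by exact_mod_cast hi
  have hstep := rpow_sub_rpow_le_mul_sub hr (a := i / N) (b := (i + 1) / N) (by positivity)
    (by gcongr; linarith) ((div_le_one hN).2 hiN)
  calc gmesh T r N (i + 1) - gmesh T r N i
      = T * (((i + 1 : ℝ) / N) ^ r - ((i : ℝ) / N) ^ r) := by unfold gmesh; push_cast; ring
    _ ≤ T * (r * ((i + 1 : ℝ) / N - i / N)) := by gcongr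
    _ = r * T / N := by field_simp; ring

lemma sub_hat_mem_Icc {T r : ℝ} (hT : 0 ≤ T) (hr : 1 ≤ r) {N n : ℕ} (hnN : n ≤ N)
    {hat : ℝ → ℝ} (hhat : ∀ i < N, ∀ s ∈ Ico (gmesh T r N i) (gmesh T r N (i + 1)),
      hat s = gmesh T r N i) :
    ∀ s ∈ Ico 0 (gmesh T r N n), s - hat s ∈ Icc 0 (r * T / N) := by
  intro s hs
  rw [← gmesh_zero T (by linarith) N] at hs
  obtain ⟨i, hi, hsi⟩ := mem_iUnion₂.1 (Ico_subset_biUnion_Ico n (gmesh T r N) hs)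
  have hiN : i < N := (Finset.mem_range.1 hi).trans_le hnN
  rw [hhat i hiN s hsi]
  exact ⟨sub_nonneg.2 hsi.1, by linarith [hsi.2, gmesh_succ_sub_le hT hr hiN]⟩

/-- Squared-difference kernel bound on the graded mesh (equation `eq.diffSqureSingle`). -/
theorem stmt13 (T r β : ℝ) (hT : 0 < T) (hr : 1 ≤ r)
    (hβ : β ∈ Set.Ioo (0:ℝ) (1/2)) :
    ∃ C > (0:ℝ), ∀ N : ℕ, 1 ≤ N → ∀ hat : ℝ → ℝ,
      (∀ i : ℕ, i < N →
        ∀ s ∈ Set.Ico (gmesh T r N i) (gmesh T r N (i + 1)), hat s = gmesh T r N i) →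
      ∀ n : ℕ, 1 ≤ n → n ≤ N →
        (∫ s in (0:ℝ)..(gmesh T r N n),
            |(gmesh T r N n - s) ^ (-β) - (gmesh T r N n - hat s) ^ (-β)| ^ 2)
          ≤ C * (N : ℝ) ^ (-(1 - 2 * β)) := by
  obtain ⟨hβ0, hβ1⟩ := hβ
  have hp : 0 < 1 - 2 * β := by linarith
  refine ⟨(1 / (1 - 2 * β) + 1) * (r * T) ^ (1 - 2 * β), by positivity, ?_⟩
  intro N hN hat hhat n _ hnN
  have hN0 : (0 : ℝ) < N := by exact_mod_cast hN
  calc _ ≤ (1 / (1 - 2 * β) + 1) * (r * T / N) ^ (1 - 2 * β) :=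
        integral_sq_rpow_neg_sub_le hat hβ0 hβ1 (by positivity) (gmesh_nonneg hT.le r N n)
          (sub_hat_mem_Icc hT.le hr hnN hhat)
    _ = (1 / (1 - 2 * β) + 1) * (r * T) ^ (1 - 2 * β) * (N : ℝ) ^ (-(1 - 2 * β)) := by
        rw [div_rpow (by positivity) hN0.le, rpow_neg hN0.le]; ring
end

section
/- Let T > 0, r ≥ 1, α ∈ (0,1), β ∈ (0,1/2), and set σ := min{3/2−α−β, 1}. Then there exists a constant C > 0, independent of N and n, such that for every integer N ≥ 1 and every n ∈ {1,…,N}, ∫_0^{t₁} (t_n − s)^{−α}·s^{1−α} ds ≤ C·t_n^{2−2α−σ/r}·N^{−σ}; in particular this quantity is at most C·t_n^{1/2−α+β+σ−σ/r}·N^{−σ}. -/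
open intervalIntegral MeasureTheory Real

lemma intA {b α : ℝ} (a : ℝ) (hα : -1 < -α) :
    IntervalIntegrable (fun s => (b - s) ^ (-α)) volume 0 a := by
  have h := (intervalIntegrable_rpow' (a := b) (b := b - a) hα).comp_sub_left b
  simpa using h

lemma intJ {b α : ℝ} (a : ℝ) (hα : α < 1) :
    (∫ s in (0:ℝ)..a, (b - s) ^ (-α)) = (b ^ (1 - α) - (b - a) ^ (1 - α)) / (1 - α) := by
  have h := integral_comp_sub_left (a := (0:ℝ)) (b := a) (fun x => x ^ (-α)) b
  rw [h, integral_rpow (Or.inl (by linarith))]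
  norm_num
  ring_nf

lemma boundA {a b α : ℝ} (ha : 0 < a) (hab : a ≤ b) (hα0 : 0 < α) (hα1 : α < 1) :
    (∫ s in (0:ℝ)..a, (b - s) ^ (-α) * s ^ (1 - α))
      ≤ a ^ (1 - α) * ((b ^ (1 - α) - (b - a) ^ (1 - α)) / (1 - α)) := by
  have hneg : (-1:ℝ) < -α := by linarith
  have hc : ContinuousOn (fun s : ℝ => s ^ (1 - α)) (Set.uIcc 0 a) :=
    continuousOn_id.rpow_const (fun x _ => Or.inr (by linarith))
  have hint : IntervalIntegrable (fun s => (b - s) ^ (-α) * s ^ (1 - α)) volume 0 a :=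
    (intA a hneg).mul_continuousOn hc
  have hint2 : IntervalIntegrable (fun s => (b - s) ^ (-α) * a ^ (1 - α)) volume 0 a :=
    (intA a hneg).mul_const _
  have hmono := integral_mono_on ha.le hint hint2 (fun s hs => by
    exact mul_le_mul_of_nonneg_left
      (Real.rpow_le_rpow hs.1 hs.2 (by linarith))
      (Real.rpow_nonneg (by linarith [hs.2]) _))
  calc (∫ s in (0:ℝ)..a, (b - s) ^ (-α) * s ^ (1 - α))
      ≤ ∫ s in (0:ℝ)..a, (b - s) ^ (-α) * a ^ (1 - α) := hmono
    _ = (∫ s in (0:ℝ)..a, (b - s) ^ (-α)) * a ^ (1 - α) := integral_mul_const _ _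
    _ = a ^ (1 - α) * ((b ^ (1 - α) - (b - a) ^ (1 - α)) / (1 - α)) := by
        rw [intJ a hα1]; ring

lemma boundB {a b α : ℝ} (ha : 0 < a) (hab : a ≤ b / 2) (hα0 : 0 < α) (hα1 : α < 1) :
    (∫ s in (0:ℝ)..a, (b - s) ^ (-α) * s ^ (1 - α))
      ≤ (b / 2) ^ (-α) * (a ^ (2 - α) / (2 - α)) := by
  have hneg : (-1:ℝ) < -α := by linarith
  have hb2 : 0 < b / 2 := lt_of_lt_of_le ha hab
  have hc : ContinuousOn (fun s : ℝ => s ^ (1 - α)) (Set.uIcc 0 a) :=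
    continuousOn_id.rpow_const (fun x _ => Or.inr (by linarith))
  have hint : IntervalIntegrable (fun s => (b - s) ^ (-α) * s ^ (1 - α)) volume 0 a :=
    (intA a hneg).mul_continuousOn hc
  have hint2 : IntervalIntegrable (fun s => (b / 2) ^ (-α) * s ^ (1 - α)) volume 0 a :=
    (intervalIntegrable_rpow' (by linarith)).const_mul _
  have hmono := integral_mono_on ha.le hint hint2 (fun s hs => by
    refine mul_le_mul_of_nonneg_right ?_ (Real.rpow_nonneg hs.1 _)
    exact Real.rpow_le_rpow_of_nonpos hb2 (by linarith [hs.2]) (by linarith))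
  calc (∫ s in (0:ℝ)..a, (b - s) ^ (-α) * s ^ (1 - α))
      ≤ ∫ s in (0:ℝ)..a, (b / 2) ^ (-α) * s ^ (1 - α) := hmono
    _ = (b / 2) ^ (-α) * ∫ s in (0:ℝ)..a, s ^ (1 - α) := integral_const_mul _ _
    _ = (b / 2) ^ (-α) * (a ^ (2 - α) / (2 - α)) := by
        rw [integral_rpow (Or.inl (by linarith : (-1:ℝ) < 1 - α))]
        rw [Real.zero_rpow (by linarith : 1 - α + 1 ≠ 0)]
        rw [show 1 - α + 1 = 2 - α by ring, sub_zero]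

/-- Bound for the initial-interval integral in the Milstein error analysis
(equation `eq.sigma3`). -/
theorem stmt14 (T r α β : ℝ) (hT : 0 < T) (hr : 1 ≤ r)
    (hα : α ∈ Set.Ioo (0:ℝ) 1) (hβ : β ∈ Set.Ioo (0:ℝ) (1/2))
    (σ : ℝ) (hσ : σ = min (3/2 - α - β) 1) :
    ∃ C > (0:ℝ), ∀ N : ℕ, 1 ≤ N → ∀ n : ℕ, 1 ≤ n → n ≤ N →
      (∫ s in (0:ℝ)..(gmesh T r N 1), (gmesh T r N n - s) ^ (-α) * s ^ (1 - α))
        ≤ C * (gmesh T r N n) ^ (2 - 2 * α - σ / r) * (N : ℝ) ^ (-σ) ∧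
      (∫ s in (0:ℝ)..(gmesh T r N 1), (gmesh T r N n - s) ^ (-α) * s ^ (1 - α))
        ≤ C * (gmesh T r N n) ^ (1/2 - α + β + σ - σ / r) * (N : ℝ) ^ (-σ) := by
  obtain ⟨hα0, hα1⟩ := hα
  obtain ⟨hβ0, hβ1⟩ := hβ
  have hr0 : (0:ℝ) < r := by linarith
  have hσ1 : σ ≤ 1 := hσ ▸ min_le_right _ _
  have hσ2 : σ ≤ 3/2 - α - β := hσ ▸ min_le_left _ _
  have hσ0 : 0 < σ := by rw [hσ]; exact lt_min (by linarith) one_pos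
  have hσr : σ / r ≤ 1 := by rw [div_le_one hr0]; linarith
  have hTσ : 0 < T ^ (σ / r) := Real.rpow_pos_of_pos hT _
  set C1 : ℝ := T ^ (σ / r) * (1 / (1 - α) + 2 ^ α / (2 - α)) with hC1
  have e1 : 0 < 1 / (1 - α) := div_pos one_pos (by linarith)
  have e2 : 0 < 2 ^ α / (2 - α) :=
    div_pos (Real.rpow_pos_of_pos two_pos α) (by linarith)
  have hC1pos : 0 < C1 := mul_pos hTσ (by linarith)
  set K : ℝ := max 1 (T ^ (3/2 - α - β - σ)) with hK
  have hK1 : (1:ℝ) ≤ K := le_max_left _ _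
  refine ⟨C1 * K, mul_pos hC1pos (by linarith), ?_⟩
  intro N hN n hn hnN
  have hNpos : (0:ℝ) < (N:ℝ) := by exact_mod_cast hN
  have hnpos : (0:ℝ) < (n:ℝ) := by exact_mod_cast hn
  set t1 := gmesh T r N 1 with ht1def
  set tn := gmesh T r N n with htndef
  have ht1 : t1 = T * ((1:ℝ)/(N:ℝ)) ^ r := by simp [ht1def, gmesh]
  have h1N : (0:ℝ) < 1/(N:ℝ) := by positivity
  have ht1pos : 0 < t1 := by
    rw [ht1]; exact mul_pos hT (Real.rpow_pos_of_pos h1N r)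
  have htnpos : 0 < tn :=
    mul_pos hT (Real.rpow_pos_of_pos (div_pos hnpos hNpos) r)
  have ht1tn : t1 ≤ tn := by
    rw [ht1]
    refine mul_le_mul_of_nonneg_left
      (Real.rpow_le_rpow h1N.le ?_ hr0.le) hT.le
    gcongr
    exact_mod_cast hn
  have htnT : tn ≤ T := by
    have : ((n:ℝ)/(N:ℝ)) ^ r ≤ 1 :=
      Real.rpow_le_one (by positivity)
        ((div_le_one hNpos).mpr (by exact_mod_cast hnN)) hr0.le
    calc tn ≤ T * 1 := mul_le_mul_of_nonneg_left this hT.le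
      _ = T := mul_one T
  -- key identity : t1 ^ (σ/r) = T^(σ/r) * N^(-σ)
  have hkey : t1 ^ (σ / r) = T ^ (σ / r) * (N:ℝ) ^ (-σ) := by
    rw [ht1, Real.mul_rpow hT.le (Real.rpow_nonneg h1N.le r),
      ← Real.rpow_mul h1N.le, show r * (σ / r) = σ by field_simp,
      one_div, Real.inv_rpow hNpos.le, ← Real.rpow_neg hNpos.le]
  have hNσ : (0:ℝ) < (N:ℝ) ^ (-σ) := Real.rpow_pos_of_pos hNpos _
  -- first inequality with constant C1
  have main1 : (∫ s in (0:ℝ)..t1, (tn - s) ^ (-α) * s ^ (1 - α))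
      ≤ C1 * tn ^ (2 - 2 * α - σ / r) * (N:ℝ) ^ (-σ) := by
    rcases eq_or_lt_of_le hn with h1 | h2
    · -- n = 1
      have hne : tn = t1 := by rw [ht1def, htndef, ← h1]
      have hb := boundA ht1pos (le_of_eq hne.symm) hα0 hα1
      rw [hne] at hb ⊢
      have hz : t1 - t1 = 0 := sub_self t1
      rw [hz, Real.zero_rpow (by linarith : 1 - α ≠ 0), sub_zero] at hb
      have heq : t1 ^ (1-α) * (t1 ^ (1-α) / (1-α))
          = (1/(1-α)) * (t1 ^ (2 - 2*α - σ/r) * (T ^ (σ/r) * (N:ℝ) ^ (-σ))) := by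
        rw [← hkey, ← Real.rpow_add ht1pos,
          show 2 - 2*α - σ/r + σ/r = 1 - α + (1 - α) by ring,
          Real.rpow_add ht1pos]
        ring
      rw [heq] at hb
      calc (∫ s in (0:ℝ)..t1, (t1 - s) ^ (-α) * s ^ (1 - α))
          ≤ (1/(1-α)) * (t1 ^ (2 - 2*α - σ/r) * (T ^ (σ/r) * (N:ℝ) ^ (-σ))) := hb
        _ = (T ^ (σ/r) * (1/(1-α))) * t1 ^ (2 - 2*α - σ/r) * (N:ℝ) ^ (-σ) := by ring
        _ ≤ C1 * t1 ^ (2 - 2*α - σ/r) * (N:ℝ) ^ (-σ) := by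
            have : T ^ (σ/r) * (1/(1-α)) ≤ C1 := by
              rw [hC1]; exact mul_le_mul_of_nonneg_left (by linarith) hTσ.le
            exact mul_le_mul_of_nonneg_right
              (mul_le_mul_of_nonneg_right this (Real.rpow_nonneg ht1pos.le _)) hNσ.le
    · -- 2 ≤ n
      have hn2 : (2:ℝ) ≤ (n:ℝ) := by exact_mod_cast h2
      have hfrac : ((1:ℝ)/(n:ℝ)) ^ r ≤ 1/2 := by
        have h1n : (0:ℝ) < 1/(n:ℝ) := by positivity
        have := Real.rpow_le_rpow_of_exponent_ge h1n
          ((div_le_one hnpos).mpr (by linarith)) hr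
        rw [Real.rpow_one] at this
        calc ((1:ℝ)/(n:ℝ)) ^ r ≤ 1/(n:ℝ) := this
          _ ≤ 1/2 := by
            rw [div_le_div_iff₀ hnpos two_pos]; linarith
      have hsplit : t1 = tn * ((1:ℝ)/(n:ℝ)) ^ r := by
        rw [ht1, htndef]
        unfold gmesh
        rw [mul_assoc, ← Real.mul_rpow (by positivity) (by positivity)]
        congr 2
        field_simp
      have ht1half : t1 ≤ tn / 2 := by
        rw [hsplit]
        calc tn * ((1:ℝ)/(n:ℝ)) ^ r ≤ tn * (1/2) :=
              mul_le_mul_of_nonneg_left hfrac htnpos.le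
          _ = tn / 2 := by ring
      have hb := boundB ht1pos ht1half hα0 hα1
      have hdiv : (tn/2) ^ (-α) = tn ^ (-α) * 2 ^ α := by
        rw [Real.div_rpow htnpos.le (by norm_num), Real.rpow_neg (by norm_num : (0:ℝ) ≤ 2)]
        rw [div_eq_mul_inv, inv_inv]
      have hexp : 0 ≤ 2 - α - σ/r := by linarith
      have ht1exp : t1 ^ (2 - α - σ/r) ≤ tn ^ (2 - α - σ/r) :=
        Real.rpow_le_rpow ht1pos.le ht1tn hexp
      have ht12 : t1 ^ (2 - α) = t1 ^ (2 - α - σ/r) * (T ^ (σ/r) * (N:ℝ) ^ (-σ)) := by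
        rw [← hkey, ← Real.rpow_add ht1pos]
        congr 1; ring
      calc (∫ s in (0:ℝ)..t1, (tn - s) ^ (-α) * s ^ (1 - α))
          ≤ (tn/2) ^ (-α) * (t1 ^ (2-α) / (2-α)) := hb
        _ = (2 ^ α / (2 - α)) * tn ^ (-α)
              * (t1 ^ (2 - α - σ/r) * (T ^ (σ/r) * (N:ℝ) ^ (-σ))) := by
            rw [hdiv, ht12]; ring
        _ ≤ (2 ^ α / (2 - α)) * tn ^ (-α)
              * (tn ^ (2 - α - σ/r) * (T ^ (σ/r) * (N:ℝ) ^ (-σ))) := by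
            refine mul_le_mul_of_nonneg_left ?_ ?_
            · exact mul_le_mul_of_nonneg_right ht1exp (by positivity)
            · exact mul_nonneg e2.le (Real.rpow_nonneg htnpos.le _)
        _ = (T ^ (σ/r) * (2 ^ α / (2 - α)))
              * (tn ^ (-α) * tn ^ (2 - α - σ/r)) * (N:ℝ) ^ (-σ) := by ring
        _ = (T ^ (σ/r) * (2 ^ α / (2 - α))) * tn ^ (2 - 2*α - σ/r) * (N:ℝ) ^ (-σ) := by
            rw [← Real.rpow_add htnpos, show -α + (2 - α - σ/r) = 2 - 2*α - σ/r by ring]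
        _ ≤ C1 * tn ^ (2 - 2*α - σ/r) * (N:ℝ) ^ (-σ) := by
            have : T ^ (σ/r) * (2 ^ α / (2 - α)) ≤ C1 := by
              rw [hC1]; exact mul_le_mul_of_nonneg_left (by linarith) hTσ.le
            exact mul_le_mul_of_nonneg_right
              (mul_le_mul_of_nonneg_right this (Real.rpow_nonneg htnpos.le _)) hNσ.le
  constructor
  · calc (∫ s in (0:ℝ)..t1, (tn - s) ^ (-α) * s ^ (1 - α))
        ≤ C1 * tn ^ (2 - 2*α - σ/r) * (N:ℝ) ^ (-σ) := main1
      _ ≤ C1 * K * tn ^ (2 - 2*α - σ/r) * (N:ℝ) ^ (-σ) := by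
          refine mul_le_mul_of_nonneg_right
            (mul_le_mul_of_nonneg_right ?_ (Real.rpow_nonneg htnpos.le _)) hNσ.le
          exact le_mul_of_one_le_right hC1pos.le hK1
  · have hΔ : 0 ≤ 3/2 - α - β - σ := by linarith
    have hsplit2 : tn ^ (2 - 2*α - σ/r)
        = tn ^ (3/2 - α - β - σ) * tn ^ (1/2 - α + β + σ - σ/r) := by
      rw [← Real.rpow_add htnpos]; congr 1; ring
    have hTK : tn ^ (3/2 - α - β - σ) ≤ K :=
      le_trans (Real.rpow_le_rpow htnpos.le htnT hΔ) (le_max_right _ _)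
    calc (∫ s in (0:ℝ)..t1, (tn - s) ^ (-α) * s ^ (1 - α))
        ≤ C1 * tn ^ (2 - 2*α - σ/r) * (N:ℝ) ^ (-σ) := main1
      _ = C1 * (tn ^ (3/2 - α - β - σ) * tn ^ (1/2 - α + β + σ - σ/r)) * (N:ℝ) ^ (-σ) := by
          rw [hsplit2]
      _ ≤ C1 * (K * tn ^ (1/2 - α + β + σ - σ/r)) * (N:ℝ) ^ (-σ) := by
          refine mul_le_mul_of_nonneg_right (mul_le_mul_of_nonneg_left ?_ hC1pos.le) hNσ.le
          exact mul_le_mul_of_nonneg_right hTK (Real.rpow_nonneg htnpos.le _)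
      _ = C1 * K * tn ^ (1/2 - α + β + σ - σ/r) * (N:ℝ) ^ (-σ) := by ring
end

section
/- Let T > 0, r ≥ 1, γ ∈ (0,1], and let m ≥ 1 be an integer. Then for every integer N ≥ 3, every n ∈ {3,…,N} and every k with 1 ≤ k ≤ n−2, one has ∫_{t_{k+1}}^{t_{k+2}} (t_n − s)^{mγ−1} ds ≤ C(r,m,γ) · ∫_{t_k}^{t_{k+1}} (t_{n−1} − s)^{mγ−1} ds, where C(r,m,γ) := r·3^{r−1}·max{(1 + r·3^{r−1})^{mγ−1}, 2^{1−mγ}}. -/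
open Real intervalIntegral

/-- L1 -/
lemma L1' {a x y : ℝ} (ha : 1 ≤ a) (hx : 0 ≤ x) (hxy : x ≤ y) :
    y ^ a - x ^ a ≤ a * y ^ (a - 1) * (y - x) := by
  rcases eq_or_lt_of_le (hx.trans hxy) with h | hy
  · have hx0 : x = 0 := le_antisymm (hxy.trans h.symm.le) hx
    subst hx0
    rw [← h]
    simp [Real.zero_rpow (by linarith : a ≠ 0)]
  · have h1 : -1 ≤ x / y - 1 := by
      have : 0 ≤ x / y := div_nonneg hx hy.le
      linarith
    have hb := one_add_mul_self_le_rpow_one_add h1 ha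
    rw [add_sub_cancel] at hb
    have hxy' : (x / y) ^ a = x ^ a / y ^ a := Real.div_rpow hx hy.le a
    rw [hxy'] at hb
    have hya : 0 < y ^ a := Real.rpow_pos_of_pos hy a
    have hy1 : y ^ (a - 1) * y = y ^ a := by
      rw [← Real.rpow_add_one hy.ne' (a-1)]; ring_nf
    have := mul_le_mul_of_nonneg_right hb hya.le
    rw [div_mul_cancel₀ _ hya.ne'] at this
    have hxy2 : x / y * y ^ a = x * y ^ (a - 1) := by
      rw [← hy1]; field_simp
    nlinarith [this]

/-- L2 -/
lemma L2' {a x y : ℝ} (ha : 1 ≤ a) (hx : 0 ≤ x) (hxy : x ≤ y) :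
    a * x ^ (a - 1) * (y - x) ≤ y ^ a - x ^ a := by
  rcases eq_or_lt_of_le hx with h | hx
  · subst h
    rcases eq_or_lt_of_le ha with h1 | h1
    · rw [← h1]; simp
    · rw [Real.zero_rpow (by linarith : a - 1 ≠ 0),
        Real.zero_rpow (by linarith : a ≠ 0)]
      have : 0 ≤ y ^ a := Real.rpow_nonneg (by linarith) a
      nlinarith
  · have h1 : -1 ≤ y / x - 1 := by
      have : 0 ≤ y / x := div_nonneg (hx.le.trans hxy) hx.le
      linarith
    have hb := one_add_mul_self_le_rpow_one_add h1 ha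
    rw [add_sub_cancel] at hb
    rw [Real.div_rpow (hx.le.trans hxy) hx.le] at hb
    have hxa : 0 < x ^ a := Real.rpow_pos_of_pos hx a
    have hx1 : x ^ (a - 1) * x = x ^ a := by
      rw [← Real.rpow_add_one hx.ne' (a-1)]; ring_nf
    have := mul_le_mul_of_nonneg_right hb hxa.le
    rw [div_mul_cancel₀ _ hxa.ne'] at this
    have : (1 + a * (y / x - 1)) * x ^ a ≤ y ^ a := this
    have hxy2 : y / x * x ^ a = y * x ^ (a - 1) := by
      rw [← hx1]; field_simp
    nlinarith [this]

/-- L3 -/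
lemma L3' {a x y : ℝ} (ha0 : 0 < a) (ha : a ≤ 1) (hx : 0 < x) (hxy : x ≤ y) :
    y ^ a - x ^ a ≤ a * x ^ (a - 1) * (y - x) := by
  have h1 : -1 ≤ y / x - 1 := by
    have : 0 ≤ y / x := div_nonneg (hx.le.trans hxy) hx.le
    linarith
  have hb := rpow_one_add_le_one_add_mul_self h1 ha0.le ha
  rw [add_sub_cancel] at hb
  rw [Real.div_rpow (hx.le.trans hxy) hx.le] at hb
  have hxa : 0 < x ^ a := Real.rpow_pos_of_pos hx a
  have hx1 : x ^ (a - 1) * x = x ^ a := by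
    rw [← Real.rpow_add_one hx.ne' (a-1)]; ring_nf
  have := mul_le_mul_of_nonneg_right hb hxa.le
  rw [div_mul_cancel₀ _ hxa.ne'] at this
  have hxy2 : y / x * x ^ a = y * x ^ (a - 1) := by
    rw [← hx1]; field_simp
  nlinarith [this]

/-- L4 -/
lemma L4' {a x y : ℝ} (ha0 : 0 < a) (ha : a ≤ 1) (hx : 0 ≤ x) (hxy : x ≤ y) (hy : 0 < y) :
    a * y ^ (a - 1) * (y - x) ≤ y ^ a - x ^ a := by
  have h1 : -1 ≤ x / y - 1 := by
    have : 0 ≤ x / y := div_nonneg hx hy.le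
    linarith
  have hb := rpow_one_add_le_one_add_mul_self h1 ha0.le ha
  rw [add_sub_cancel] at hb
  rw [Real.div_rpow hx hy.le] at hb
  have hya : 0 < y ^ a := Real.rpow_pos_of_pos hy a
  have hy1 : y ^ (a - 1) * y = y ^ a := by
    rw [← Real.rpow_add_one hy.ne' (a-1)]; ring_nf
  have := mul_le_mul_of_nonneg_right hb hya.le
  rw [div_mul_cancel₀ _ hya.ne'] at this
  have hxy2 : x / y * y ^ a = x * y ^ (a - 1) := by
    rw [← hy1]; field_simp
  nlinarith [this]

/-- step ratio on reals -/
lemma step_ratio {r x : ℝ} (hr : 1 ≤ r) (hx : 1 ≤ x) :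
    (x + 1) ^ r - x ^ r ≤ r * 3 ^ (r - 1) * (x ^ r - (x - 1) ^ r) := by
  have h1 : (x + 1) ^ r - x ^ r ≤ r * (x + 1) ^ (r - 1) := by
    have h := L1' (a := r) (x := x) (y := x + 1) hr (by linarith) (by linarith)
    have e : x + 1 - x = 1 := by ring
    rw [e, mul_one] at h
    exact h
  have h2 : (x + 1) ^ (r - 1) ≤ 3 ^ (r - 1) * x ^ (r - 1) := by
    calc (x + 1) ^ (r - 1) ≤ (3 * x) ^ (r - 1) :=
          Real.rpow_le_rpow (by linarith) (by linarith) (by linarith)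
      _ = 3 ^ (r - 1) * x ^ (r - 1) := Real.mul_rpow (by norm_num) (by linarith)
  have h3 : x ^ (r - 1) ≤ x ^ r - (x - 1) ^ r := by
    have hxr : x ^ (r - 1) * x = x ^ r := by
      rw [← Real.rpow_add_one (by linarith : x ≠ 0)]; ring_nf
    have h4 : (x - 1) ^ r = (x - 1) ^ (r - 1) * (x - 1) := by
      rcases eq_or_lt_of_le hx with h | h
      · rw [← h]; simp [Real.zero_rpow (by linarith : r ≠ 0)]
      · rw [← Real.rpow_add_one (by linarith : x - 1 ≠ 0)]; ring_nf
    have h5 : (x - 1) ^ (r - 1) ≤ x ^ (r - 1) :=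
      Real.rpow_le_rpow (by linarith) (by linarith) (by linarith)
    nlinarith [Real.rpow_nonneg (show (0:ℝ) ≤ x - 1 by linarith) (r - 1)]
  have hr0 : (0:ℝ) ≤ r := by linarith
  calc (x + 1) ^ r - x ^ r ≤ r * (x + 1) ^ (r - 1) := h1
    _ ≤ r * (3 ^ (r - 1) * x ^ (r - 1)) := mul_le_mul_of_nonneg_left h2 hr0
    _ ≤ r * (3 ^ (r - 1) * (x ^ r - (x - 1) ^ r)) := by
        have h9 : (0:ℝ) ≤ 3 ^ (r - 1) := Real.rpow_nonneg (by norm_num) _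
        exact mul_le_mul_of_nonneg_left (mul_le_mul_of_nonneg_left h3 h9) hr0
    _ = r * 3 ^ (r - 1) * (x ^ r - (x - 1) ^ r) := by ring

/-- steps are monotone, real level -/
lemma step_mono_real {r x : ℝ} (hr : 1 ≤ r) (hx : 1 ≤ x) :
    x ^ r - (x - 1) ^ r ≤ (x + 1) ^ r - x ^ r := by
  have h1 := L1' (a := r) (x := x - 1) (y := x) hr (by linarith) (by linarith)
  have h2 := L2' (a := r) (x := x) (y := x + 1) hr (by linarith) (by linarith)
  have e1 : x - (x - 1) = 1 := by ring
  have e2 : x + 1 - x = 1 := by ring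
  rw [e1, mul_one] at h1
  rw [e2, mul_one] at h2
  linarith

lemma gmesh_eq (T r : ℝ) (N j : ℕ) :
    gmesh T r N j = T / (N:ℝ) ^ r * (j:ℝ) ^ r := by
  unfold gmesh
  rw [Real.div_rpow (Nat.cast_nonneg j) (Nat.cast_nonneg N)]
  ring

section Mesh
variable {T r : ℝ} {N : ℕ}

lemma gmesh_mono (hT : 0 < T) (hr : 1 ≤ r) {i j : ℕ} (h : i ≤ j) :
    gmesh T r N i ≤ gmesh T r N j := by
  unfold gmesh
  apply mul_le_mul_of_nonneg_left _ hT.le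
  apply Real.rpow_le_rpow (div_nonneg (Nat.cast_nonneg i) (Nat.cast_nonneg N)) _ (by linarith)
  gcongr

lemma gmesh_strictMono (hT : 0 < T) (hr : 1 ≤ r) (hN : 1 ≤ N) {i j : ℕ} (h : i < j) :
    gmesh T r N i < gmesh T r N j := by
  unfold gmesh
  apply mul_lt_mul_of_pos_left _ hT
  apply Real.rpow_lt_rpow (div_nonneg (Nat.cast_nonneg i) (Nat.cast_nonneg N)) _ (by linarith)
  have hN0 : (0:ℝ) < (N:ℝ) := by exact_mod_cast hN
  exact (div_lt_div_iff_of_pos_right hN0).mpr (by exact_mod_cast h)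

lemma gmesh_step_ratio (hT : 0 < T) (hr : 1 ≤ r) (j : ℕ) :
    gmesh T r N (j + 2) - gmesh T r N (j + 1)
      ≤ r * 3 ^ (r - 1) * (gmesh T r N (j + 1) - gmesh T r N j) := by
  have hc : 0 ≤ T / (N:ℝ) ^ r :=
    div_nonneg hT.le (Real.rpow_nonneg (Nat.cast_nonneg N) r)
  have h := step_ratio (r := r) (x := (j:ℝ) + 1) hr (by have := Nat.cast_nonneg (α := ℝ) j; linarith)
  have e1 : (j:ℝ) + 1 + 1 = (j:ℝ) + 2 := by ring
  have e2 : (j:ℝ) + 1 - 1 = (j:ℝ) := by ring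
  rw [e1, e2] at h
  rw [gmesh_eq, gmesh_eq, gmesh_eq]
  push_cast
  nlinarith [mul_le_mul_of_nonneg_left h hc]

lemma gmesh_step_succ (hT : 0 < T) (hr : 1 ≤ r) (j : ℕ) :
    gmesh T r N (j + 1) - gmesh T r N j
      ≤ gmesh T r N (j + 2) - gmesh T r N (j + 1) := by
  have hc : 0 ≤ T / (N:ℝ) ^ r :=
    div_nonneg hT.le (Real.rpow_nonneg (Nat.cast_nonneg N) r)
  have h := step_mono_real (r := r) (x := (j:ℝ) + 1) hr (by have := Nat.cast_nonneg (α := ℝ) j; linarith)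
  have e1 : (j:ℝ) + 1 + 1 = (j:ℝ) + 2 := by ring
  have e2 : (j:ℝ) + 1 - 1 = (j:ℝ) := by ring
  rw [e1, e2] at h
  rw [gmesh_eq, gmesh_eq, gmesh_eq]
  push_cast
  nlinarith [mul_le_mul_of_nonneg_left h hc]

lemma gmesh_step_mono (hT : 0 < T) (hr : 1 ≤ r) {i j : ℕ} (h : i ≤ j) :
    gmesh T r N (i + 1) - gmesh T r N i ≤ gmesh T r N (j + 1) - gmesh T r N j := by
  induction j with
  | zero => have : i = 0 := Nat.le_zero.mp h; subst this; exact le_refl _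
  | succ j ih =>
      rcases Nat.lt_succ_iff_lt_or_eq.mp (Nat.lt_succ_of_le h) with h' | h'
      · exact le_trans (ih (Nat.lt_succ_iff.mp h'))
          (by simpa [Nat.succ_eq_add_one] using gmesh_step_succ (T := T) (r := r) (N := N) hT hr j)
      · subst h'; exact le_refl _



/-- Shifted-interval comparison of singular integrals (equation `eq.calimGronwall`). -/
theorem stmt18 (T r γ : ℝ) (hT : 0 < T) (hr : 1 ≤ r)
    (hγ : γ ∈ Set.Ioc (0:ℝ) 1) (m : ℕ) (hm : 1 ≤ m) :
    ∀ N : ℕ, 3 ≤ N → ∀ n : ℕ, 3 ≤ n → n ≤ N → ∀ k : ℕ, 1 ≤ k → k ≤ n - 2 →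
      (∫ s in (gmesh T r N (k + 1))..(gmesh T r N (k + 2)),
          (gmesh T r N n - s) ^ ((m : ℝ) * γ - 1))
        ≤ (r * (3:ℝ) ^ (r - 1)
            * max ((1 + r * (3:ℝ) ^ (r - 1)) ^ ((m : ℝ) * γ - 1))
                  ((2:ℝ) ^ (1 - (m : ℝ) * γ)))
          * ∫ s in (gmesh T r N k)..(gmesh T r N (k + 1)),
              (gmesh T r N (n - 1) - s) ^ ((m : ℝ) * γ - 1) := by
  intro N hN n hn3 hnN k hk1 hk2
  obtain ⟨q, rfl⟩ : ∃ q, n = q + 3 := ⟨n - 3, by omega⟩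
  have hkq : k ≤ q + 1 := by omega
  rw [show q + 3 - 1 = q + 2 from by omega]
  set t : ℕ → ℝ := gmesh T r N with ht
  set a : ℝ := (m : ℝ) * γ with ha_def
  have hm1 : (1:ℝ) ≤ (m:ℝ) := by exact_mod_cast hm
  have ha0 : 0 < a := mul_pos (by linarith) hγ.1
  set C3 : ℝ := r * (3:ℝ) ^ (r - 1) with hC3_def
  have h3pow : (1:ℝ) ≤ (3:ℝ) ^ (r - 1) := by
    have := Real.rpow_le_rpow_of_exponent_le (by norm_num : (1:ℝ) ≤ 3)
      (by linarith : (0:ℝ) ≤ r - 1)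
    rwa [Real.rpow_zero] at this
  have hC3one : 1 ≤ C3 := by nlinarith
  have hC30 : 0 ≤ C3 := by linarith
  set M : ℝ := max ((1 + C3) ^ (a - 1)) ((2:ℝ) ^ (1 - a)) with hM_def
  have heval : ∀ u v c' : ℝ, ∫ s in u..v, (c' - s) ^ (a - 1)
      = ((c' - u) ^ a - (c' - v) ^ a) / a := by
    intro u v c'
    rw [intervalIntegral.integral_comp_sub_left (fun s => s ^ (a - 1)) c']
    rw [integral_rpow (Or.inl (by linarith : (-1:ℝ) < a - 1))]
    rw [show a - 1 + 1 = a from by ring]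
  rw [heval, heval, ← mul_div_assoc]
  set A : ℝ := t (q + 3) - t (k + 1) with hA_def
  set B : ℝ := t (q + 3) - t (k + 2) with hB_def
  set D : ℝ := t (q + 2) - t k with hD_def
  set E : ℝ := t (q + 2) - t (k + 1) with hE_def
  -- mesh facts
  have s1 : t (k + 2) - t (k + 1) ≤ t (q + 3) - t (q + 2) :=
    gmesh_step_mono hT hr (show k + 1 ≤ q + 2 by omega)
  have s2 : t (k + 1) - t k ≤ t (q + 3) - t (q + 2) :=
    gmesh_step_mono hT hr (show k ≤ q + 2 by omega)
  have sr1 : t (k + 2) - t (k + 1) ≤ C3 * (t (k + 1) - t k) := gmesh_step_ratio hT hr k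
  have hE0 : 0 ≤ E := by
    rw [hE_def]; have := gmesh_mono (T := T) (r := r) (N := N) hT hr
      (show k + 1 ≤ q + 2 by omega); linarith
  have hBA : B ≤ A := by
    rw [hA_def, hB_def]
    have := gmesh_mono (T := T) (r := r) (N := N) hT hr (show k + 1 ≤ k + 2 by omega)
    linarith
  have hED : E ≤ D := by
    rw [hD_def, hE_def]
    have := gmesh_mono (T := T) (r := r) (N := N) hT hr (show k ≤ k + 1 by omega)
    linarith
  have hEB : E ≤ B := by rw [hE_def, hB_def]; linarith
  have hAB : A - B ≤ C3 * (D - E) := by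
    rw [hA_def, hB_def, hD_def, hE_def]
    have e : t (q+3) - t (k+1) - (t (q+3) - t (k+2)) = t (k+2) - t (k+1) := by ring
    rw [e, show t (q+2) - t k - (t (q+2) - t (k+1)) = t (k+1) - t k from by ring]
    exact sr1
  have hN1 : 1 ≤ N := by omega
  have key : A ^ a - B ^ a ≤ C3 * M * (D ^ a - E ^ a) := by
    rcases eq_or_lt_of_le hkq with hkq1 | hkq1
    · -- k = q + 1 : degenerate case
      have hB0 : B = 0 := by rw [hB_def, hkq1, show q + 1 + 2 = q + 3 from rfl, sub_self]
      have hEz : E = 0 := by rw [hE_def, hkq1, show q + 1 + 1 = q + 2 from rfl, sub_self]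
      rw [hB0, hEz, Real.zero_rpow ha0.ne', sub_zero, sub_zero]
      have hACD : A ≤ C3 * D := by
        have := hAB; rw [hB0, hEz] at this; linarith
      have hD0 : 0 < D := by
        rw [hD_def, hkq1]
        have := gmesh_strictMono (T := T) (r := r) (N := N) hT hr hN1
          (show q + 1 < q + 2 by omega)
        linarith
      have hA0 : 0 ≤ A := by linarith [hBA, hB0.le, hB0.ge]
      have h4 : A ^ a ≤ (C3 * D) ^ a := Real.rpow_le_rpow hA0 hACD ha0.le
      rw [Real.mul_rpow hC30 hD0.le] at h4
      have hC3aM : C3 ^ a ≤ C3 * M := by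
        rcases le_total a 1 with h | h
        · have h1 : C3 ^ a ≤ C3 ^ (1:ℝ) := Real.rpow_le_rpow_of_exponent_le hC3one h
          rw [Real.rpow_one] at h1
          have hM1 : (1:ℝ) ≤ M := by
            have h2 : (1:ℝ) ≤ (2:ℝ) ^ (1 - a) := by
              have := Real.rpow_le_rpow_of_exponent_le (by norm_num : (1:ℝ) ≤ 2)
                (by linarith : (0:ℝ) ≤ 1 - a)
              rwa [Real.rpow_zero] at this
            exact le_trans h2 (le_max_right _ _)
          nlinarith
        · have h1 : C3 ^ a = C3 * C3 ^ (a - 1) := by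
            rw [show a = 1 + (a - 1) from by ring,
              Real.rpow_add (by linarith : (0:ℝ) < C3), Real.rpow_one]
            ring_nf
          have h2 : C3 ^ (a - 1) ≤ (1 + C3) ^ (a - 1) :=
            Real.rpow_le_rpow hC30 (by linarith) (by linarith)
          have h3 : (1 + C3) ^ (a - 1) ≤ M := le_max_left _ _
          rw [h1]
          exact mul_le_mul_of_nonneg_left (le_trans h2 h3) hC30
      have hDa : 0 ≤ D ^ a := Real.rpow_nonneg hD0.le a
      calc A ^ a ≤ C3 ^ a * D ^ a := h4
        _ ≤ C3 * M * D ^ a := mul_le_mul_of_nonneg_right hC3aM hDa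
    · -- k ≤ q : main case
      have hkq' : k ≤ q := by omega
      have hEpos : 0 < E := by
        rw [hE_def]
        have := gmesh_strictMono (T := T) (r := r) (N := N) hT hr hN1
          (show k + 1 < q + 2 by omega)
        linarith
      have hB0 : 0 < B := lt_of_lt_of_le hEpos hEB
      have hD0 : 0 < D := lt_of_lt_of_le hEpos hED
      have hA0 : 0 ≤ A := le_trans hB0.le hBA
      have hA1 : A ≤ (1 + C3) * E := by
        have r1 : t (q + 3) - t (q + 2) ≤ C3 * (t (q + 2) - t (q + 1)) :=
          gmesh_step_ratio hT hr (q + 1)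
        have r2 : t (k + 1) ≤ t (q + 1) :=
          gmesh_mono (T := T) (r := r) (N := N) hT hr (by omega)
        have r3 : C3 * (t (q + 2) - t (q + 1)) ≤ C3 * (t (q + 2) - t (k + 1)) :=
          mul_le_mul_of_nonneg_left (by linarith) hC30
        rw [hA_def, hE_def]; linarith [r1, r3]
      have hD2B : D ≤ 2 * B := by
        have s4 : t (k + 2) ≤ t (q + 2) :=
          gmesh_mono (T := T) (r := r) (N := N) hT hr (by omega)
        rw [hD_def, hB_def]; linarith [s1, s2]
      have hABn : 0 ≤ A - B := by linarith
      have hDEn : 0 ≤ D - E := by linarith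
      rcases le_total a 1 with hac | hac
      · -- sublinear case
        have h1 : A ^ a - B ^ a ≤ a * B ^ (a - 1) * (A - B) := L3' ha0 hac hB0 hBA
        have h2 : a * D ^ (a - 1) * (D - E) ≤ D ^ a - E ^ a := L4' ha0 hac hE0 hED hD0
        have h7 : (0:ℝ) < (2:ℝ) ^ (a - 1) := Real.rpow_pos_of_pos (by norm_num) _
        have hBpow : B ^ (a - 1) ≤ 2 ^ (1 - a) * D ^ (a - 1) := by
          have hhalf : 0 < D / 2 := by linarith
          have h3 : D / 2 ≤ B := by linarith
          have h4 : B ^ (a - 1) ≤ (D / 2) ^ (a - 1) :=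
            Real.rpow_le_rpow_of_nonpos hhalf h3 (by linarith)
          have h5 : (D / 2) ^ (a - 1) = D ^ (a - 1) / 2 ^ (a - 1) :=
            Real.div_rpow hD0.le (by norm_num) _
          have h6 : (2:ℝ) ^ (1 - a) * 2 ^ (a - 1) = 1 := by
            rw [← Real.rpow_add (by norm_num : (0:ℝ) < 2)]; norm_num
          calc B ^ (a - 1) ≤ (D / 2) ^ (a - 1) := h4
            _ = D ^ (a - 1) / 2 ^ (a - 1) := h5
            _ = 2 ^ (1 - a) * D ^ (a - 1) := by
                rw [div_eq_iff h7.ne']; linear_combination (-(D ^ (a - 1))) * h6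
        have h2M : (2:ℝ) ^ (1 - a) ≤ M := le_max_right _ _
        have hDa1 : 0 ≤ D ^ (a - 1) := Real.rpow_nonneg hD0.le _
        have h2a : 0 ≤ (2:ℝ) ^ (1 - a) := Real.rpow_nonneg (by norm_num) _
        have hDE : 0 ≤ D ^ a - E ^ a :=
          le_trans (mul_nonneg (mul_nonneg ha0.le hDa1) hDEn) h2
        calc A ^ a - B ^ a ≤ a * B ^ (a - 1) * (A - B) := h1
          _ ≤ a * (2 ^ (1 - a) * D ^ (a - 1)) * (C3 * (D - E)) := by
              apply mul_le_mul (mul_le_mul_of_nonneg_left hBpow ha0.le) hAB hABn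
              exact mul_nonneg ha0.le (mul_nonneg h2a hDa1)
          _ = (C3 * 2 ^ (1 - a)) * (a * D ^ (a - 1) * (D - E)) := by ring
          _ ≤ (C3 * 2 ^ (1 - a)) * (D ^ a - E ^ a) :=
              mul_le_mul_of_nonneg_left h2 (mul_nonneg hC30 h2a)
          _ ≤ C3 * M * (D ^ a - E ^ a) := by
              exact mul_le_mul_of_nonneg_right
                (mul_le_mul_of_nonneg_left h2M hC30) hDE
      · -- superlinear case
        have h1 : A ^ a - B ^ a ≤ a * A ^ (a - 1) * (A - B) := L1' hac hB0.le hBA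
        have h2 : a * E ^ (a - 1) * (D - E) ≤ D ^ a - E ^ a := L2' hac hE0 hED
        have hApow : A ^ (a - 1) ≤ (1 + C3) ^ (a - 1) * E ^ (a - 1) := by
          have h3 : A ^ (a - 1) ≤ ((1 + C3) * E) ^ (a - 1) :=
            Real.rpow_le_rpow hA0 hA1 (by linarith)
          rwa [Real.mul_rpow (by linarith) hE0] at h3
        have h1M : (1 + C3) ^ (a - 1) ≤ M := le_max_left _ _
        have hEa1 : 0 ≤ E ^ (a - 1) := Real.rpow_nonneg hE0 _
        have h1C : 0 ≤ (1 + C3) ^ (a - 1) := Real.rpow_nonneg (by linarith) _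
        have hDE : 0 ≤ D ^ a - E ^ a :=
          le_trans (mul_nonneg (mul_nonneg ha0.le hEa1) hDEn) h2
        calc A ^ a - B ^ a ≤ a * A ^ (a - 1) * (A - B) := h1
          _ ≤ a * ((1 + C3) ^ (a - 1) * E ^ (a - 1)) * (C3 * (D - E)) := by
              apply mul_le_mul (mul_le_mul_of_nonneg_left hApow ha0.le) hAB hABn
              exact mul_nonneg ha0.le (mul_nonneg h1C hEa1)
          _ = (C3 * (1 + C3) ^ (a - 1)) * (a * E ^ (a - 1) * (D - E)) := by ring
          _ ≤ (C3 * (1 + C3) ^ (a - 1)) * (D ^ a - E ^ a) :=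
              mul_le_mul_of_nonneg_left h2 (mul_nonneg hC30 h1C)
          _ ≤ C3 * M * (D ^ a - E ^ a) :=
              mul_le_mul_of_nonneg_right (mul_le_mul_of_nonneg_left h1M hC30) hDE
  exact div_le_div_of_nonneg_right key ha0.le
end Mesh
end
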